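/- arXiv:2505.24868 — 3 statements merged into one kernel-verified Lean document; each statement's English description precedes it below -/
import Mathlib

section
/- Let L₁ and L₂ be distinct line segments in ℝ² of equal positive length that intersect at their common midpoint, and let (σ_N) be a sequence of positive reals with N·σ_N → 0 as N → ∞. Then there exists a sequence of measurable estimators ẑ_N : (ℝ²)^N → {1,2}^N achieving exact recovery: when (z, X) is sampled from GLMM_N(L₁, L₂, σ_N), one has P(Ham*(ẑ_N(X), z) = 0) → 1 as N → ∞. -/
open MeasureTheory ProbabilityTheory Filter

noncomputable section

abbrev E2 := EuclideanSpace ℝ (Fin 2)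

def stdGaussian2 : Measure E2 :=
  Measure.map (MeasurableEquiv.toLp 2 (Fin 2 → ℝ))
    (Measure.pi fun _ : Fin 2 => gaussianReal 0 1)

def uniformSeg (a b : E2) : Measure E2 :=
  Measure.map (fun t : ℝ => a + t • (b - a)) (volume.restrict (Set.Icc (0:ℝ) 1))

def obsLaw (a b : E2) (σ : ℝ) : Measure E2 :=
  Measure.map (fun q : E2 × E2 => q.1 + σ • q.2) ((uniformSeg a b).prod stdGaussian2)

def labelLaw : Measure (Fin 2) := (PMF.uniformOfFintype (Fin 2)).toMeasure

def GLMM (N : ℕ) (a₁ b₁ a₂ b₂ : E2) (σ : ℝ) :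
    Measure ((Fin N → Fin 2) × (Fin N → E2)) :=
  (Measure.pi fun _ : Fin N => labelLaw).bind fun z =>
    Measure.map (fun x => (z, x))
      (Measure.pi fun i => if z i = 0 then obsLaw a₁ b₁ σ else obsLaw a₂ b₂ σ)

def hamStar {N : ℕ} (zhat z : Fin N → Fin 2) : ℕ :=
  min ((Finset.univ.filter fun i => zhat i ≠ z i).card)
      ((Finset.univ.filter fun i => zhat i ≠ Equiv.swap 0 1 (z i)).card)

open scoped ENNReal NNReal
open Metric

/-! ### Auxiliary lemmas -/

instance : IsProbabilityMeasure (volume.restrict (Set.Icc (0:ℝ) 1)) := by constructor; simp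

instance (a b : E2) : IsProbabilityMeasure (uniformSeg a b) :=
  Measure.isProbabilityMeasure_map (by fun_prop)

instance : IsProbabilityMeasure stdGaussian2 :=
  Measure.isProbabilityMeasure_map (MeasurableEquiv.measurable _).aemeasurable

instance (a b : E2) (σ : ℝ) : IsProbabilityMeasure (obsLaw a b σ) :=
  Measure.isProbabilityMeasure_map (by fun_prop)

instance : IsProbabilityMeasure labelLaw := PMF.toMeasure.isProbabilityMeasure _

theorem pi_eval_apply {ι : Type*} [Fintype ι] [DecidableEq ι] {α : ι → Type*}
    [∀ i, MeasurableSpace (α i)]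
    (μ : ∀ i, Measure (α i)) [∀ i, IsProbabilityMeasure (μ i)] (i : ι)
    {A : Set (α i)} (hA : MeasurableSet A) :
    Measure.pi μ (Function.eval i ⁻¹' A) = μ i A := by
  rw [Set.eval_preimage, Measure.pi_pi]
  rw [Finset.prod_eq_single i]
  · simp
  · intro j _ hj; simp [Function.update_of_ne hj]
  · simp

theorem map_eval_pi {ι : Type*} [Fintype ι] [DecidableEq ι] {α : ι → Type*}
    [∀ i, MeasurableSpace (α i)]
    (μ : ∀ i, Measure (α i)) [∀ i, IsProbabilityMeasure (μ i)] (i : ι) :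
    (Measure.pi μ).map (Function.eval i) = μ i := by
  refine Measure.ext fun A hA => ?_
  rw [Measure.map_apply (measurable_pi_apply i) hA, pi_eval_apply μ i hA]

theorem K1_fin : ∫⁻ t : ℝ, ‖t‖₊ ∂(gaussianReal 0 1) ≠ ⊤ := by
  rw [gaussianReal_of_var_ne_zero _ one_ne_zero,
    lintegral_withDensity_eq_lintegral_mul _ (measurable_gaussianPDF 0 1)
      (show Measurable (fun t : ℝ => (‖t‖₊ : ℝ≥0∞)) from
        measurable_coe_nnreal_ennreal.comp measurable_nnnorm)]
  have hint : Integrable (fun t : ℝ => gaussianPDFReal 0 1 t * |t|) := by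
    have h0 : Integrable
        (fun t : ℝ => (Real.sqrt (2 * Real.pi))⁻¹ * |t * Real.exp (-(1/2) * t^2)|) :=
      ((integrable_mul_exp_neg_mul_sq (by norm_num : (0:ℝ) < 1/2)).abs.const_mul _)
    refine h0.congr (Filter.Eventually.of_forall fun t => ?_)
    rw [gaussianPDFReal_def]
    simp only [abs_mul, Real.abs_exp, NNReal.coe_one, mul_one, sub_zero]
    ring_nf
  have h2 : (gaussianPDF 0 1 * fun t => (‖t‖₊ : ℝ≥0∞))
      = fun t => ENNReal.ofReal (gaussianPDFReal 0 1 t * |t|) := by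
    funext t
    rw [Pi.mul_apply, gaussianPDF, ENNReal.ofReal_mul (gaussianPDFReal_nonneg 0 1 t)]
    congr 1
    exact Real.enorm_eq_ofReal_abs t
  rw [h2]
  have h3 := hint.hasFiniteIntegral
  refine ne_of_lt (lt_of_le_of_lt (lintegral_mono fun t => ?_) h3)
  rw [Real.enorm_eq_ofReal_abs]
  exact ENNReal.ofReal_le_ofReal (le_abs_self _)

theorem K_fin : ∫⁻ y : E2, ‖y‖₊ ∂stdGaussian2 ≠ ⊤ := by
  rw [stdGaussian2, lintegral_map
    (show Measurable (fun y : E2 => (‖y‖₊ : ℝ≥0∞)) from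
      measurable_coe_nnreal_ennreal.comp measurable_nnnorm)
    (MeasurableEquiv.measurable _)]
  have hb : ∀ x : Fin 2 → ℝ,
      (‖(MeasurableEquiv.toLp 2 (Fin 2 → ℝ)) x‖₊ : ℝ≥0∞) ≤ ‖x 0‖₊ + ‖x 1‖₊ := by
    intro x
    have h1 : ‖(MeasurableEquiv.toLp 2 (Fin 2 → ℝ)) x‖ ≤ |x 0| + |x 1| := by
      rw [EuclideanSpace.norm_eq]
      have hs : ∑ i : Fin 2, ‖((MeasurableEquiv.toLp 2 (Fin 2 → ℝ)) x) i‖ ^ 2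
          = (x 0)^2 + (x 1)^2 := by
        simp [Fin.sum_univ_two, sq_abs]
      rw [hs]
      rw [show |x 0| + |x 1| = Real.sqrt ((|x 0| + |x 1|)^2) from
        (Real.sqrt_sq (by positivity)).symm]
      apply Real.sqrt_le_sqrt
      have h0 := abs_nonneg (x 0); have h1 := abs_nonneg (x 1)
      nlinarith [sq_abs (x 0), sq_abs (x 1)]
    calc (‖(MeasurableEquiv.toLp 2 (Fin 2 → ℝ)) x‖₊ : ℝ≥0∞)
        = ENNReal.ofReal ‖(MeasurableEquiv.toLp 2 (Fin 2 → ℝ)) x‖ := by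
          rw [ofReal_norm_eq_enorm, enorm_eq_nnnorm]
      _ ≤ ENNReal.ofReal (|x 0| + |x 1|) := ENNReal.ofReal_le_ofReal h1
      _ = ‖x 0‖₊ + ‖x 1‖₊ := by
          rw [ENNReal.ofReal_add (abs_nonneg _) (abs_nonneg _),
            ← Real.enorm_eq_ofReal_abs, ← Real.enorm_eq_ofReal_abs, enorm_eq_nnnorm, enorm_eq_nnnorm]
  refine ne_of_lt (lt_of_le_of_lt (lintegral_mono hb) ?_)
  rw [lintegral_add_left (by fun_prop)]
  have heval : ∀ i : Fin 2, ∫⁻ x : Fin 2 → ℝ, (‖x i‖₊ : ℝ≥0∞)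
      ∂(Measure.pi fun _ : Fin 2 => gaussianReal 0 1)
      = ∫⁻ t : ℝ, ‖t‖₊ ∂(gaussianReal 0 1) := by
    intro i
    have := (lintegral_map
        (show Measurable (fun t : ℝ => (‖t‖₊ : ℝ≥0∞)) from
          measurable_coe_nnreal_ennreal.comp measurable_nnnorm)
        (measurable_pi_apply i)
        (μ := Measure.pi fun _ : Fin 2 => gaussianReal 0 1)).symm
    rw [this, map_eval_pi (fun _ : Fin 2 => gaussianReal 0 1) i]
  rw [heval 0, heval 1]
  exact ENNReal.add_lt_top.mpr ⟨K1_fin.lt_top, K1_fin.lt_top⟩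

theorem notpar (a₁ b₁ a₂ b₂ : E2)
    (hlen : ‖b₁ - a₁‖ = ‖b₂ - a₂‖) (hpos : 0 < ‖b₁ - a₁‖)
    (hmid : midpoint ℝ a₁ b₁ = midpoint ℝ a₂ b₂)
    (hdist : segment ℝ a₁ b₁ ≠ segment ℝ a₂ b₂) :
    b₁ - a₁ ∉ Submodule.span ℝ {b₂ - a₂} := by
  intro hmem
  rw [Submodule.mem_span_singleton] at hmem
  obtain ⟨r, hr⟩ := hmem
  have hw : ‖b₂ - a₂‖ ≠ 0 := by rw [← hlen]; exact hpos.ne'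
  have habs : |r| = 1 := by
    have h : |r| * ‖b₂ - a₂‖ = ‖b₂ - a₂‖ := by
      rw [← Real.norm_eq_abs, ← norm_smul, hr, hlen]
    exact mul_right_cancel₀ hw (h.trans (one_mul _).symm)
  have hsum : a₁ + b₁ = a₂ + b₂ := by
    have h1 := hmid
    rw [midpoint_eq_smul_add, midpoint_eq_smul_add] at h1
    have := congrArg (fun x : E2 => (2:ℝ) • x) h1
    simpa [smul_smul] using this
  rcases abs_eq (by norm_num : (0:ℝ) ≤ 1) |>.mp habs with h1 | h1
  · subst h1
    have hD : b₂ - a₂ = b₁ - a₁ := by rw [← hr, one_smul]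
    have hb : b₁ = b₂ := by
      linear_combination (norm := module) ((2:ℝ)⁻¹) • hsum - ((2:ℝ)⁻¹) • hD
    have ha : a₁ = a₂ := by
      linear_combination (norm := module) ((2:ℝ)⁻¹) • hsum + ((2:ℝ)⁻¹) • hD
    exact hdist (by rw [ha, hb])
  · subst h1
    have hr' : a₂ - b₂ = b₁ - a₁ := by rw [← hr]; module
    have hb : b₁ = a₂ := by
      linear_combination (norm := module) ((2:ℝ)⁻¹) • hsum - ((2:ℝ)⁻¹) • hr'
    have ha : a₁ = b₂ := by
      linear_combination (norm := module) ((2:ℝ)⁻¹) • hsum + ((2:ℝ)⁻¹) • hr'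
    exact hdist (by rw [ha, hb, segment_symm])

theorem seg_dist_lb (a b a' b' : E2)
    (hmid : midpoint ℝ a b = midpoint ℝ a' b') (t : ℝ) :
    |t - 1/2| * infDist (b - a) (Submodule.span ℝ {b' - a'} : Set E2)
      ≤ infDist (a + t • (b - a)) (segment ℝ a' b') := by
  set c := infDist (b - a) (Submodule.span ℝ {b' - a'} : Set E2) with hc
  by_contra hlt
  push_neg at hlt
  obtain ⟨p, hp, hdlt⟩ := (infDist_lt_iff ⟨a', left_mem_segment ℝ a' b'⟩).mp hlt
  rw [segment_eq_image'] at hp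
  obtain ⟨r, hr01, rfl⟩ := hp
  have key : ∀ s u : ℝ, |s| * c ≤ ‖s • (b - a) - u • (b' - a')‖ := by
    intro s u
    rcases eq_or_ne s 0 with rfl | hs
    · simp
    · have h1 : ((u/s) • (b' - a') : E2) ∈ (Submodule.span ℝ {b' - a'} : Set E2) :=
        Submodule.smul_mem _ _ (Submodule.mem_span_singleton_self _)
      have h2 : c ≤ dist (b - a) ((u/s) • (b' - a')) := infDist_le_dist_of_mem h1
      have h3 : ‖s • (b - a) - u • (b' - a')‖ = |s| * dist (b - a) ((u/s) • (b' - a')) := by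
        have h4 : s • (b - a - (u/s) • (b' - a')) = s • (b - a) - u • (b' - a') := by
          rw [smul_sub, smul_smul, mul_div_cancel₀ _ hs]
        rw [dist_eq_norm, ← h4, norm_smul, Real.norm_eq_abs]
      rw [h3]
      exact mul_le_mul_of_nonneg_left h2 (abs_nonneg s)
  have hrepr : (a + t • (b - a)) - (a' + r • (b' - a'))
      = (t - 1/2) • (b - a) - (r - 1/2) • (b' - a') := by
    have hsum : a + b = a' + b' := by
      have h1 := hmid
      rw [midpoint_eq_smul_add, midpoint_eq_smul_add] at h1
      have := congrArg (fun x : E2 => (2:ℝ) • x) h1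
      simpa [smul_smul] using this
    linear_combination (norm := module) ((2:ℝ)⁻¹) • hsum
  rw [dist_eq_norm, hrepr] at hdlt
  exact absurd hdlt (not_lt.mpr (key _ _))

theorem errBound (a b : E2) (T : Set E2)
    (c σ : ℝ) (hc : 0 < c) (hσ : 0 < σ)
    (hlb : ∀ t : ℝ, |t - 1/2| * c ≤ infDist (a + t • (b - a)) T) :
    obsLaw a b σ {x | infDist x T ≤ infDist x (segment ℝ a b)}
      ≤ ENNReal.ofReal (4 * σ / c) * ∫⁻ y : E2, ‖y‖₊ ∂stdGaussian2 := by
  set E : Set E2 := {x | infDist x T ≤ infDist x (segment ℝ a b)} with hE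
  have hEmeas : MeasurableSet E :=
    measurableSet_le (continuous_infDist_pt T).measurable
      (continuous_infDist_pt _).measurable
  have hadd : Measurable (fun q : E2 × E2 => q.1 + σ • q.2) := by fun_prop
  rw [obsLaw, Measure.map_apply hadd hEmeas,
    Measure.prod_apply_symm (hadd hEmeas)]
  have hpt : ∀ y : E2, uniformSeg a b {u | u + σ • y ∈ E}
      ≤ ENNReal.ofReal (4 * σ / c) * ‖y‖₊ := by
    intro y
    have hSmeas : MeasurableSet {u : E2 | u + σ • y ∈ E} :=
      (measurable_add_const (σ • y)) hEmeas
    rw [uniformSeg, Measure.map_apply (by fun_prop) hSmeas,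
      Measure.restrict_apply ((by fun_prop : Measurable fun t : ℝ => a + t • (b - a)) hSmeas)]
    have hsub : (fun t : ℝ => a + t • (b - a)) ⁻¹' {u | u + σ • y ∈ E} ∩ Set.Icc 0 1
        ⊆ Set.Icc (1/2 - 2 * σ * ‖y‖ / c) (1/2 + 2 * σ * ‖y‖ / c) := by
      rintro t ⟨htE, ht01⟩
      set u := a + t • (b - a) with hu
      set x := u + σ • y with hx
      have hxE : infDist x T ≤ infDist x (segment ℝ a b) := htE
      have humem : u ∈ segment ℝ a b := by
        rw [segment_eq_image']
        exact ⟨t, ht01, rfl⟩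
      have h1 : infDist x (segment ℝ a b) ≤ σ * ‖y‖ := by
        have := infDist_le_dist_of_mem humem (x := x)
        rw [dist_eq_norm, hx] at this
        simpa [norm_smul, abs_of_pos hσ] using this
      have h2 : infDist u T ≤ 2 * σ * ‖y‖ := by
        have h3 : infDist u T ≤ infDist x T + dist u x := infDist_le_infDist_add_dist
        have h4 : dist u x = σ * ‖y‖ := by
          rw [hx, dist_eq_norm]
          simp [norm_smul, abs_of_pos hσ]
        nlinarith [hxE, h1]
      have h5 := hlb t
      have h6 : |t - 1/2| ≤ 2 * σ * ‖y‖ / c := by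
        rw [le_div_iff₀ hc]
        calc |t - 1/2| * c ≤ infDist u T := h5
          _ ≤ 2 * σ * ‖y‖ := h2
      rw [Set.mem_Icc]
      constructor <;> [linarith [abs_le.mp h6]; linarith [abs_le.mp h6]]
    calc volume ((fun t : ℝ => a + t • (b - a)) ⁻¹' {u | u + σ • y ∈ E} ∩ Set.Icc 0 1)
        ≤ volume (Set.Icc (1/2 - 2 * σ * ‖y‖ / c) (1/2 + 2 * σ * ‖y‖ / c)) :=
          measure_mono hsub
      _ = ENNReal.ofReal (4 * σ * ‖y‖ / c) := by
          rw [Real.volume_Icc]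
          congr 1
          ring
      _ = ENNReal.ofReal (4 * σ / c) * ‖y‖₊ := by
          rw [← enorm_eq_nnnorm, ← ofReal_norm_eq_enorm, ← ENNReal.ofReal_mul (by positivity)]
          congr 1
          ring
  calc ∫⁻ y, uniformSeg a b {u | (u, y) ∈ (fun q : E2 × E2 => q.1 + σ • q.2) ⁻¹' E}
        ∂stdGaussian2
      ≤ ∫⁻ y, ENNReal.ofReal (4 * σ / c) * ‖y‖₊ ∂stdGaussian2 := lintegral_mono fun y => hpt y
    _ = ENNReal.ofReal (4 * σ / c) * ∫⁻ y : E2, ‖y‖₊ ∂stdGaussian2 :=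
        lintegral_const_mul _ (measurable_coe_nnreal_ennreal.comp measurable_nnnorm)

theorem hamStar_zero {N : ℕ} (zh z : Fin N → Fin 2) (h : ∀ i, zh i = z i) :
    hamStar zh z = 0 := by
  have h1 : (Finset.univ.filter fun i => zh i ≠ z i).card = 0 := by
    rw [Finset.card_eq_zero, Finset.filter_eq_empty_iff]
    intro i _
    simp [h i]
  exact Nat.le_zero.mp (le_min_iff.mp (le_of_eq rfl) |>.1.trans_eq h1 |>.trans (Nat.zero_le 0))

set_option maxHeartbeats 2000000 in
/-- exact recovery is possible when N·σ_N → 0. -/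
theorem exact_recovery_possible
    (a₁ b₁ a₂ b₂ : E2)
    (hlen : ‖b₁ - a₁‖ = ‖b₂ - a₂‖) (hpos : 0 < ‖b₁ - a₁‖)
    (hmid : midpoint ℝ a₁ b₁ = midpoint ℝ a₂ b₂)
    (hdist : segment ℝ a₁ b₁ ≠ segment ℝ a₂ b₂)
    (σ : ℕ → ℝ) (hσpos : ∀ N, 0 < σ N)
    (hσ : Tendsto (fun N : ℕ => (N : ℝ) * σ N) atTop (nhds 0)) :
    ∃ zhat : (N : ℕ) → (Fin N → E2) → (Fin N → Fin 2),
      (∀ N, Measurable (zhat N)) ∧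
      Tendsto
        (fun N : ℕ => GLMM N a₁ b₁ a₂ b₂ (σ N) {p | hamStar (zhat N p.2) p.1 = 0})
        atTop (nhds 1) := by
  classical
  set S₁ := segment ℝ a₁ b₁ with hS₁
  set S₂ := segment ℝ a₂ b₂ with hS₂
  set clf : E2 → Fin 2 := fun x => if infDist x S₁ ≤ infDist x S₂ then 0 else 1 with hclfdef
  have hclf : Measurable clf := by
    refine Measurable.ite ?_ measurable_const measurable_const
    exact measurableSet_le (continuous_infDist_pt _).measurable
      (continuous_infDist_pt _).measurable
  -- geometric constant
  set c : ℝ := min (infDist (b₁ - a₁) (Submodule.span ℝ {b₂ - a₂} : Set E2))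
      (infDist (b₂ - a₂) (Submodule.span ℝ {b₁ - a₁} : Set E2)) with hcdef
  have hcpos : 0 < c := by
    have hnp₁ : b₁ - a₁ ∉ Submodule.span ℝ {b₂ - a₂} := notpar a₁ b₁ a₂ b₂ hlen hpos hmid hdist
    have hnp₂ : b₂ - a₂ ∉ Submodule.span ℝ {b₁ - a₁} :=
      notpar a₂ b₂ a₁ b₁ hlen.symm (hlen ▸ hpos) hmid.symm hdist.symm
    have hcl₁ : IsClosed (Submodule.span ℝ {b₂ - a₂} : Set E2) :=
      Submodule.closed_of_finiteDimensional _
    have hcl₂ : IsClosed (Submodule.span ℝ {b₁ - a₁} : Set E2) :=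
      Submodule.closed_of_finiteDimensional _
    refine lt_min ?_ ?_
    · exact (hcl₁.notMem_iff_infDist_pos ⟨0, Submodule.zero_mem _⟩).mp hnp₁
    · exact (hcl₂.notMem_iff_infDist_pos ⟨0, Submodule.zero_mem _⟩).mp hnp₂
  have hlb₁ : ∀ t : ℝ, |t - 1/2| * c ≤ infDist (a₁ + t • (b₁ - a₁)) S₂ := fun t =>
    le_trans (mul_le_mul_of_nonneg_left (min_le_left _ _) (abs_nonneg _))
      (seg_dist_lb a₁ b₁ a₂ b₂ hmid t)
  have hlb₂ : ∀ t : ℝ, |t - 1/2| * c ≤ infDist (a₂ + t • (b₂ - a₂)) S₁ := fun t =>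
    le_trans (mul_le_mul_of_nonneg_left (min_le_right _ _) (abs_nonneg _))
      (seg_dist_lb a₂ b₂ a₁ b₁ hmid.symm t)
  -- the common per-point error bound
  set K : ℝ≥0∞ := ∫⁻ y : E2, ‖y‖₊ ∂stdGaussian2 with hK
  set B : ℕ → ℝ≥0∞ := fun N => ENNReal.ofReal (4 * σ N / c) * K with hB
  have herr₁ : ∀ N, obsLaw a₁ b₁ (σ N) {x | clf x ≠ 0} ≤ B N := by
    intro N
    refine le_trans (measure_mono ?_) (errBound a₁ b₁ S₂ c (σ N) hcpos (hσpos N) hlb₁)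
    intro x hx
    simp only [Set.mem_setOf_eq] at hx ⊢
    by_contra hcon
    push_neg at hcon
    exact hx (by simp only [hclfdef]; rw [if_pos hcon.le])
  have herr₂ : ∀ N, obsLaw a₂ b₂ (σ N) {x | clf x ≠ 1} ≤ B N := by
    intro N
    refine le_trans (measure_mono ?_) (errBound a₂ b₂ S₁ c (σ N) hcpos (hσpos N) hlb₂)
    intro x hx
    simp only [Set.mem_setOf_eq] at hx ⊢
    by_contra hcon
    exact hx (by simp only [hclfdef]; rw [if_neg hcon])
  -- the estimator
  refine ⟨fun N x i => clf (x i),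
    fun N => measurable_pi_lambda _ fun i => hclf.comp (measurable_pi_apply i), ?_⟩
  -- probability measure instances for the conditional laws
  have hmeaslaw : ∀ N, ∀ z : Fin N → Fin 2, ∀ i : Fin N,
      IsProbabilityMeasure (if z i = 0 then obsLaw a₁ b₁ (σ N) else obsLaw a₂ b₂ (σ N)) := by
    intro N z i
    split <;> infer_instance
  have hbindmeas : ∀ N, Measurable (fun z : Fin N → Fin 2 =>
      Measure.map (fun x => (z, x))
        (Measure.pi fun i => if z i = 0 then obsLaw a₁ b₁ (σ N) else obsLaw a₂ b₂ (σ N))) :=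
    fun N => Measurable.of_discrete
  have hprob : ∀ N, IsProbabilityMeasure (GLMM N a₁ b₁ a₂ b₂ (σ N)) := by
    intro N
    constructor
    rw [GLMM, Measure.bind_apply MeasurableSet.univ (hbindmeas N).aemeasurable]
    have huniv : ∀ z : Fin N → Fin 2,
        Measure.map (fun x => (z, x))
          (Measure.pi fun i => if z i = 0 then obsLaw a₁ b₁ (σ N) else obsLaw a₂ b₂ (σ N))
          Set.univ = 1 := by
      intro z
      haveI := hmeaslaw N z
      rw [Measure.map_apply measurable_prodMk_left MeasurableSet.univ]
      simp
    simp only [huniv, lintegral_one, measure_univ]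
  -- measurability of single-coordinate error events
  have hSi : ∀ N, ∀ i : Fin N, MeasurableSet
      {p : (Fin N → Fin 2) × (Fin N → E2) | clf (p.2 i) ≠ p.1 i} := by
    intro N i
    have hm : Measurable (fun p : (Fin N → Fin 2) × (Fin N → E2) =>
        (p.1 i, clf (p.2 i))) :=
      ((measurable_pi_apply i).comp measurable_fst).prodMk
        (hclf.comp ((measurable_pi_apply i).comp measurable_snd))
    exact hm (MeasurableSet.of_discrete (s := {q : Fin 2 × Fin 2 | q.2 ≠ q.1}))
  -- failure events
  have hfail : ∀ N, GLMM N a₁ b₁ a₂ b₂ (σ N)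
      {p : (Fin N → Fin 2) × (Fin N → E2) | ∃ i, clf (p.2 i) ≠ p.1 i} ≤ N * B N := by
    intro N
    have hone : ∀ i : Fin N, GLMM N a₁ b₁ a₂ b₂ (σ N)
        {p : (Fin N → Fin 2) × (Fin N → E2) | clf (p.2 i) ≠ p.1 i} ≤ B N := by
      intro i
      rw [GLMM, Measure.bind_apply (hSi N i) (hbindmeas N).aemeasurable]
      have hz : ∀ z : Fin N → Fin 2,
          Measure.map (fun x => (z, x))
            (Measure.pi fun j => if z j = 0 then obsLaw a₁ b₁ (σ N) else obsLaw a₂ b₂ (σ N))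
            {p : (Fin N → Fin 2) × (Fin N → E2) | clf (p.2 i) ≠ p.1 i} ≤ B N := by
        intro z
        haveI := hmeaslaw N z
        rw [Measure.map_apply measurable_prodMk_left (hSi N i)]
        have hpre : (fun x : Fin N → E2 => (z, x)) ⁻¹'
            {p : (Fin N → Fin 2) × (Fin N → E2) | clf (p.2 i) ≠ p.1 i}
            = Function.eval i ⁻¹' {v : E2 | clf v ≠ z i} := rfl
        have hA : MeasurableSet {v : E2 | clf v ≠ z i} :=
          hclf (MeasurableSet.of_discrete (s := ({z i}ᶜ : Set (Fin 2))))
        rw [hpre, pi_eval_apply _ i hA]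
        by_cases hz0 : z i = 0
        · rw [if_pos hz0, hz0]
          exact herr₁ N
        · rw [if_neg hz0, Fin.eq_one_of_ne_zero (z i) hz0]
          exact herr₂ N
      refine le_trans (lintegral_mono hz) ?_
      rw [lintegral_const, measure_univ, mul_one]
    calc GLMM N a₁ b₁ a₂ b₂ (σ N) {p | ∃ i, clf (p.2 i) ≠ p.1 i}
        = GLMM N a₁ b₁ a₂ b₂ (σ N) (⋃ i, {p | clf (p.2 i) ≠ p.1 i}) := by
          rw [Set.setOf_exists]
      _ ≤ ∑' i : Fin N, GLMM N a₁ b₁ a₂ b₂ (σ N) {p | clf (p.2 i) ≠ p.1 i} :=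
          measure_iUnion_le _
      _ ≤ ∑' _i : Fin N, B N := ENNReal.tsum_le_tsum fun i => hone i
      _ = N * B N := by
          rw [tsum_fintype]
          simp [Finset.sum_const, Finset.card_univ, nsmul_eq_mul]
  -- the bound tends to zero
  have hbound : Tendsto (fun N : ℕ => (N : ℝ≥0∞) * B N) atTop (nhds 0) := by
    have hreal : Tendsto (fun N : ℕ => (N : ℝ) * (4 * σ N / c)) atTop (nhds 0) := by
      have heq : (fun N : ℕ => (N : ℝ) * (4 * σ N / c))
          = fun N : ℕ => (4 / c) * ((N : ℝ) * σ N) := by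
        funext N; ring
      rw [heq]
      simpa using hσ.const_mul (4 / c)
    have heq2 : (fun N : ℕ => (N : ℝ≥0∞) * B N)
        = fun N : ℕ => ENNReal.ofReal ((N : ℝ) * (4 * σ N / c)) * K := by
      funext N
      rw [hB, ← mul_assoc, ENNReal.ofReal_mul (by positivity), ENNReal.ofReal_natCast]
    rw [heq2]
    have := ENNReal.Tendsto.mul_const (ENNReal.tendsto_ofReal hreal) (Or.inr K_fin)
    simpa using this
  -- success events
  have hSucc_meas : ∀ N, MeasurableSet
      {p : (Fin N → Fin 2) × (Fin N → E2) | hamStar (fun i => clf (p.2 i)) p.1 = 0} := by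
    intro N
    have hm : Measurable (fun p : (Fin N → Fin 2) × (Fin N → E2) =>
        hamStar (fun i => clf (p.2 i)) p.1) := by
      have hg : Measurable (fun q : (Fin N → Fin 2) × (Fin N → Fin 2) =>
          hamStar q.1 q.2) := Measurable.of_discrete
      exact hg.comp ((measurable_pi_lambda _ fun i =>
        hclf.comp ((measurable_pi_apply i).comp measurable_snd)).prodMk measurable_fst)
    exact hm (measurableSet_singleton 0)
  have hcompl_sub : ∀ N,
      {p : (Fin N → Fin 2) × (Fin N → E2) | hamStar (fun i => clf (p.2 i)) p.1 = 0}ᶜ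
        ⊆ {p : (Fin N → Fin 2) × (Fin N → E2) | ∃ i, clf (p.2 i) ≠ p.1 i} := by
    intro N p hp
    simp only [Set.mem_compl_iff, Set.mem_setOf_eq] at hp
    simp only [Set.mem_setOf_eq]
    by_contra hcon
    push_neg at hcon
    exact hp (hamStar_zero _ _ hcon)
  have hcompl0 : Tendsto (fun N : ℕ => GLMM N a₁ b₁ a₂ b₂ (σ N)
      {p : (Fin N → Fin 2) × (Fin N → E2) | hamStar (fun i => clf (p.2 i)) p.1 = 0}ᶜ)
      atTop (nhds 0) := by
    refine tendsto_of_tendsto_of_tendsto_of_le_of_le tendsto_const_nhds hbound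
      (fun N => zero_le) (fun N => ?_)
    exact le_trans (measure_mono (hcompl_sub N)) (hfail N)
  have heq : (fun N : ℕ => GLMM N a₁ b₁ a₂ b₂ (σ N)
        {p : (Fin N → Fin 2) × (Fin N → E2) | hamStar (fun i => clf (p.2 i)) p.1 = 0})
      = fun N : ℕ => 1 - GLMM N a₁ b₁ a₂ b₂ (σ N)
        {p : (Fin N → Fin 2) × (Fin N → E2) | hamStar (fun i => clf (p.2 i)) p.1 = 0}ᶜ := by
    funext N
    haveI := hprob N
    rw [prob_compl_eq_one_sub (hSucc_meas N), ENNReal.sub_sub_cancel ENNReal.one_ne_top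
      prob_le_one]
  rw [heq]
  have hfin := ENNReal.Tendsto.sub (tendsto_const_nhds (x := (1 : ℝ≥0∞))) hcompl0
    (Or.inl ENNReal.one_ne_top)
  simpa using hfin
end
end

section
/- Let L₁ and L₂ be distinct line segments in ℝ² of equal positive length that intersect at their common midpoint, and let (σ_N) be a sequence of positive reals with liminf_N N·σ_N > 0. Then no sequence of measurable estimators achieves exact recovery: for every sequence of measurable maps ẑ_N : (ℝ²)^N → {1,2}^N, when (z, X) is sampled from GLMM_N(L₁, L₂, σ_N), the probabilities P(Ham*(ẑ_N(X), z) = 0) do not converge to 1. -/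
open MeasureTheory ProbabilityTheory Filter

noncomputable section

open Metric
open scoped NNReal ENNReal

def c1 : ℝ := (Real.sqrt (2*Real.pi))⁻¹ * Real.exp (-2⁻¹)

lemma c1_pos : 0 < c1 := by
  apply mul_pos (inv_pos.mpr (Real.sqrt_pos.mpr (by positivity))) (Real.exp_pos _)

lemma gauss1_ge (s : Set ℝ) (hs : MeasurableSet s) :
    ENNReal.ofReal c1 * volume (s ∩ Set.Icc (-1:ℝ) 1) ≤ gaussianReal 0 1 s := by
  rw [gaussianReal_apply 0 one_ne_zero s]
  calc ENNReal.ofReal c1 * volume (s ∩ Set.Icc (-1:ℝ) 1)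
      = ∫⁻ _ in s ∩ Set.Icc (-1:ℝ) 1, ENNReal.ofReal c1 := (setLIntegral_const _ _).symm
    _ ≤ ∫⁻ x in s ∩ Set.Icc (-1:ℝ) 1, gaussianPDF 0 1 x := by
        refine setLIntegral_mono (measurable_gaussianPDF _ _) (fun x hx => ?_)
        unfold gaussianPDF
        refine ENNReal.ofReal_le_ofReal ?_
        unfold c1 gaussianPDFReal
        have hx1 : x ∈ Set.Icc (-1:ℝ) 1 := hx.2
        have hxsq : x ^ 2 ≤ 1 := by
          rw [← one_pow 2]
          exact sq_le_sq' hx1.1 hx1.2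
        have h1 : (2 * Real.pi * ((1:ℝ≥0):ℝ)) = 2 * Real.pi := by
          rw [NNReal.coe_one, mul_one]
        rw [h1]
        refine mul_le_mul_of_nonneg_left ?_ (by positivity)
        apply Real.exp_le_exp.mpr
        rw [NNReal.coe_one, mul_one, sub_zero, neg_div, neg_le_neg_iff]
        linarith
    _ ≤ ∫⁻ x in s, gaussianPDF 0 1 x := lintegral_mono_set Set.inter_subset_left



lemma hamStar_eq_zero_iff {N : ℕ} (v z : Fin N → Fin 2) :
    hamStar v z = 0 ↔ (v = z ∨ v = fun i => Equiv.swap 0 1 (z i)) := by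
  unfold hamStar
  rw [Nat.min_eq_zero_iff, Finset.card_eq_zero, Finset.card_eq_zero,
    Finset.filter_eq_empty_iff, Finset.filter_eq_empty_iff]
  constructor
  · rintro (h | h)
    · exact Or.inl (funext fun i => not_ne_iff.mp (h (Finset.mem_univ i)))
    · exact Or.inr (funext fun i => not_ne_iff.mp (h (Finset.mem_univ i)))
  · rintro (h | h) <;> subst h
    · exact Or.inl (fun _ _ => not_ne_iff.mpr rfl)
    · exact Or.inr (fun _ _ => not_ne_iff.mpr rfl)

lemma swap_ne (x : Fin 2) : Equiv.swap 0 1 x ≠ x := by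
  fin_cases x <;> decide

section exp
variable {ι : Type*} [Fintype ι] [DecidableEq ι] {α : Type*} [MeasurableSpace α]

lemma pi_add_expansion (μ ν : ι → Measure α) [∀ i, IsFiniteMeasure (μ i)]
    [∀ i, IsFiniteMeasure (ν i)] :
    Measure.pi (fun i => μ i + ν i) =
      ∑ T ∈ Finset.univ.powerset, Measure.pi (fun i => if i ∈ T then μ i else ν i) := by
  refine Measure.pi_eq fun s hs => ?_
  rw [Measure.finset_sum_apply]
  have : ∀ T ∈ Finset.univ.powerset,
      Measure.pi (fun i => if i ∈ T then μ i else ν i) (Set.pi Set.univ s)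
        = (∏ i ∈ T, μ i (s i)) * ∏ i ∈ Finset.univ \ T, ν i (s i) := by
    intro T _
    haveI : ∀ i, SigmaFinite ((fun i => if i ∈ T then μ i else ν i) i) := by
      intro i; by_cases h : i ∈ T <;> simp only [h, if_true, if_false] <;> infer_instance
    rw [Measure.pi_pi]
    have : ∀ i, ((if i ∈ T then μ i else ν i) (s i)) =
        if i ∈ T then μ i (s i) else ν i (s i) := fun i => by split <;> rfl
    simp_rw [this]
    rw [Finset.prod_ite]
    congr 1
    · apply Finset.prod_congr _ (fun _ _ => rfl)
      ext i; simp
    · apply Finset.prod_congr _ (fun _ _ => rfl)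
      ext i; simp
  rw [Finset.sum_congr rfl this, ← Finset.prod_add]
  simp

lemma pi_mono' (μ ν : ι → Measure α) [∀ i, IsFiniteMeasure (ν i)]
    (h : ∀ i, μ i ≤ ν i) : Measure.pi μ ≤ Measure.pi ν := by
  haveI : ∀ i, IsFiniteMeasure (μ i) := fun i => isFiniteMeasure_of_le _ (h i)
  have hdecomp : (fun i => μ i + (ν i - μ i)) = ν := by
    funext i
    rw [add_comm, Measure.sub_add_cancel_of_le (h i)]
  rw [← hdecomp, pi_add_expansion]
  rw [Measure.le_iff']
  intro s
  rw [Measure.finset_sum_apply]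
  have huniv : Measure.pi (fun i => if i ∈ (Finset.univ : Finset ι) then μ i
      else (ν i - μ i)) (s) = Measure.pi μ s := by
    simp
  rw [← huniv]
  exact Finset.single_le_sum
    (f := fun T => (Measure.pi fun i => if i ∈ T then μ i else ν i - μ i) s)
    (fun T _ => zero_le) (Finset.mem_powerset_self _)


section stdgauss

lemma euclid_coord_le {y : E2} (i : Fin 2) : |y i| ≤ ‖y‖ := by
  rw [EuclideanSpace.norm_eq]
  have h1 : |y i| = Real.sqrt (‖y i‖ ^ 2) := by
    rw [Real.sqrt_sq_eq_abs, Real.norm_eq_abs, abs_abs]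
  rw [h1]
  apply Real.sqrt_le_sqrt
  exact Finset.single_le_sum (f := fun j => ‖y j‖ ^ 2) (fun j _ => by positivity)
    (Finset.mem_univ i)

lemma stdGauss_ge (S : Set E2) (hS : MeasurableSet S) :
    ENNReal.ofReal c1 ^ 2 * volume (S ∩ ball (0:E2) 1) ≤ stdGaussian2 S := by
  classical
  set e := (MeasurableEquiv.toLp 2 (Fin 2 → ℝ)).symm with he
  change ENNReal.ofReal c1 ^ 2 * volume (S ∩ ball (0:E2) 1) ≤
    Measure.map e.symm (Measure.pi fun _ : Fin 2 => gaussianReal 0 1) S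
  rw [Measure.map_apply e.symm.measurable hS]
  set W := e.symm ⁻¹' S with hW
  set m0 : Measure ℝ := ENNReal.ofReal c1 • volume.restrict (Set.Icc (-1:ℝ) 1) with hm0
  have hm0app : ∀ s : Set ℝ, MeasurableSet s → m0 s
      = ENNReal.ofReal c1 * volume (s ∩ Set.Icc (-1:ℝ) 1) := by
    intro s hs
    rw [hm0, Measure.smul_apply, smul_eq_mul, Measure.restrict_apply hs]
  have hm0le : m0 ≤ gaussianReal 0 1 := by
    rw [Measure.le_iff]
    intro s hs
    rw [hm0app s hs]
    exact gauss1_ge s hs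
  haveI : IsFiniteMeasure m0 := by
    constructor
    rw [hm0, Measure.smul_apply, smul_eq_mul, Measure.restrict_apply MeasurableSet.univ,
      Set.univ_inter, Real.volume_Icc]
    exact ENNReal.mul_lt_top ENNReal.ofReal_lt_top ENNReal.ofReal_lt_top
  have hpile := pi_mono' (fun _ : Fin 2 => m0) (fun _ => gaussianReal 0 1) (fun _ => hm0le)
  refine le_trans ?_ (hpile W)
  set box : Set (Fin 2 → ℝ) := Set.pi Set.univ (fun _ => Set.Icc (-1:ℝ) 1) with hbox
  have hpi : Measure.pi (fun _ : Fin 2 => m0) = (ENNReal.ofReal c1 ^ 2) •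
      ((Measure.pi fun _ : Fin 2 => (volume : Measure ℝ)).restrict box) := by
    refine Measure.pi_eq fun s hs => ?_
    rw [Measure.smul_apply, smul_eq_mul, Measure.restrict_apply (MeasurableSet.univ_pi hs)]
    have : Set.pi Set.univ s ∩ box = Set.pi Set.univ (fun i => s i ∩ Set.Icc (-1:ℝ) 1) := by
      rw [hbox, ← Set.pi_inter_distrib]
    rw [this, Measure.pi_pi, Fin.prod_univ_two, Fin.prod_univ_two,
      hm0app _ (hs 0), hm0app _ (hs 1)]
    ring
  rw [hpi, Measure.smul_apply, smul_eq_mul, Measure.restrict_apply (e.symm.measurable hS)]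
  refine mul_le_mul_right ?_ _
  have hsub : e.symm ⁻¹' (S ∩ ball (0:E2) 1) ⊆ W ∩ box := by
    intro x hx
    rcases hx with ⟨hxS, hxb⟩
    refine ⟨hxS, ?_⟩
    intro i _
    have hcoord : (e.symm x) i = x i := rfl
    have : |x i| ≤ ‖e.symm x‖ := by rw [← hcoord]; exact euclid_coord_le i
    have hn : ‖e.symm x‖ < 1 := by
      rw [mem_ball, dist_zero_right] at hxb
      exact hxb
    exact abs_le.mp (this.trans hn.le)
  have hmp := (EuclideanSpace.volume_preserving_symm_measurableEquiv_toLp (Fin 2)).symm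
  have hpre : (Measure.pi fun _ : Fin 2 => (volume : Measure ℝ)) (e.symm ⁻¹' (S ∩ ball (0:E2) 1))
      = volume (S ∩ ball (0:E2) 1) := by
    rw [← MeasureTheory.volume_pi]
    exact hmp.measure_preimage (hS.inter measurableSet_ball).nullMeasurableSet
  rw [← hpre]
  exact measure_mono hsub

end stdgauss





instance inst_s1 : IsProbabilityMeasure stdGaussian2 := by
  rw [stdGaussian2]
  exact Measure.isProbabilityMeasure_map
    (MeasurableEquiv.toLp 2 (Fin 2 → ℝ)).measurable.aemeasurable

instance unif01_prob : IsProbabilityMeasure ((volume : Measure ℝ).restrict (Set.Icc (0:ℝ) 1)) := by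
  constructor
  rw [Measure.restrict_apply MeasurableSet.univ, Set.univ_inter, Real.volume_Icc]
  norm_num

lemma measurable_seg (a b : E2) : Measurable (fun t : ℝ => a + t • (b - a)) :=
  measurable_const.add (measurable_id.smul_const (b - a))

instance uniformSeg_prob (a b : E2) : IsProbabilityMeasure (uniformSeg a b) := by
  rw [uniformSeg]
  exact Measure.isProbabilityMeasure_map (measurable_seg a b).aemeasurable

lemma measurable_obsmap (σ : ℝ) : Measurable (fun q : E2 × E2 => q.1 + σ • q.2) :=
  measurable_fst.add (measurable_snd.const_smul σ)

instance obsLaw_prob (a b : E2) (σ : ℝ) : IsProbabilityMeasure (obsLaw a b σ) := by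
  rw [obsLaw]
  exact Measure.isProbabilityMeasure_map (measurable_obsmap σ).aemeasurable

lemma midpoint_sub (a b : E2) (t : ℝ) :
    a + t • (b - a) - midpoint ℝ a b = (t - 2⁻¹) • (b - a) := by
  rw [midpoint_eq_smul_add, invOf_eq_inv (2:ℝ)]
  module

lemma obs_ge (a b : E2) (σ : ℝ) (hσ : 0 < σ) (hl : 0 < ‖b - a‖) (S : Set E2)
    (hS : MeasurableSet S) :
    (ENNReal.ofReal c1 ^ 2 * ENNReal.ofReal ((σ^2)⁻¹) *
        ENNReal.ofReal (2 * min (σ / (2 * ‖b - a‖)) 2⁻¹)) *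
      volume (S ∩ ball (midpoint ℝ a b) (σ/2)) ≤ obsLaw a b σ S := by
  classical
  set L := ‖b - a‖ with hL
  set m := midpoint ℝ a b with hm
  set r' := min (σ / (2 * L)) 2⁻¹ with hr'
  have hr'pos : 0 < r' := lt_min (by positivity) (by norm_num)
  have hr'le : r' ≤ 2⁻¹ := min_le_right _ _
  set V := S ∩ ball m (σ/2) with hV
  have hVmeas : MeasurableSet V := hS.inter measurableSet_ball
  set K := ENNReal.ofReal c1 ^ 2 * ENNReal.ofReal ((σ^2)⁻¹) * volume V with hK
  rw [obsLaw, Measure.map_apply (measurable_obsmap σ) hS,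
    Measure.prod_apply ((measurable_obsmap σ) hS)]
  -- pointwise slice bound
  have hslice : ∀ u : E2, u ∈ closedBall m (σ/2) →
      K ≤ stdGaussian2 (Prod.mk u ⁻¹' ((fun q : E2 × E2 => q.1 + σ • q.2) ⁻¹' S)) := by
    intro u hu
    have hset : (Prod.mk u ⁻¹' ((fun q : E2 × E2 => q.1 + σ • q.2) ⁻¹' S))
        = {y : E2 | u + σ • y ∈ S} := rfl
    rw [hset]
    have hmeas' : MeasurableSet {y : E2 | u + σ • y ∈ S} :=
      (measurable_const.add (measurable_id.const_smul σ)) hS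
    refine le_trans ?_ (stdGauss_ge _ hmeas')
    have hsub : (fun y : E2 => u + σ • y) ⁻¹' V ⊆ {y : E2 | u + σ • y ∈ S} ∩ ball 0 1 := by
      intro y hy
      rcases hy with ⟨hyS, hyb⟩
      refine ⟨hyS, ?_⟩
      have h1 : ‖σ • y‖ < σ := by
        have : σ • y = (u + σ • y - m) - (u - m) := by abel
        rw [this]
        calc ‖(u + σ • y - m) - (u - m)‖ ≤ ‖u + σ • y - m‖ + ‖u - m‖ := norm_sub_le _ _
          _ < σ/2 + σ/2 := by
              apply add_lt_add_of_lt_of_le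
              · rw [← dist_eq_norm]; exact mem_ball.mp hyb
              · rw [← dist_eq_norm]; exact mem_closedBall.mp hu
          _ = σ := by ring
      rw [mem_ball, dist_zero_right]
      rw [norm_smul, Real.norm_eq_abs, abs_of_pos hσ] at h1
      nlinarith [norm_nonneg y]
    have hpre : volume ((fun y : E2 => u + σ • y) ⁻¹' V)
        = ENNReal.ofReal ((σ^2)⁻¹) * volume V := by
      have hcomp : (fun y : E2 => u + σ • y) = (fun v : E2 => u + v) ∘ (fun y : E2 => σ • y) := rfl
      rw [hcomp, Set.preimage_comp]
      rw [Measure.addHaar_preimage_smul volume (ne_of_gt hσ), measure_preimage_add]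
      congr 1
      rw [finrank_euclideanSpace_fin, abs_inv, abs_of_pos (by positivity : (0:ℝ) < σ^2)]
    calc K = ENNReal.ofReal c1 ^ 2 * (ENNReal.ofReal ((σ^2)⁻¹) * volume V) := by
            rw [hK, mul_assoc]
      _ = ENNReal.ofReal c1 ^ 2 * volume ((fun y : E2 => u + σ • y) ⁻¹' V) := by rw [hpre]
      _ ≤ ENNReal.ofReal c1 ^ 2 * volume ({y : E2 | u + σ • y ∈ S} ∩ ball 0 1) :=
            mul_le_mul_right (measure_mono hsub) _
  -- lower bound integral by indicator
  have hind : K * (uniformSeg a b) (closedBall m (σ/2)) ≤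
      ∫⁻ u, stdGaussian2 (Prod.mk u ⁻¹' ((fun q : E2 × E2 => q.1 + σ • q.2) ⁻¹' S))
        ∂(uniformSeg a b) := by
    rw [← setLIntegral_const (closedBall m (σ/2)) K]
    rw [← lintegral_indicator measurableSet_closedBall]
    apply lintegral_mono
    intro u
    by_cases h : u ∈ closedBall m (σ/2)
    · rw [Set.indicator_of_mem h]; exact hslice u h
    · rw [Set.indicator_of_notMem h]; exact zero_le
  refine le_trans ?_ hind
  -- lower bound uniformSeg of closed ball
  have hseg : ENNReal.ofReal (2 * r') ≤ (uniformSeg a b) (closedBall m (σ/2)) := by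
    rw [uniformSeg, Measure.map_apply (measurable_seg a b) measurableSet_closedBall]
    have hsub2 : Set.Icc (2⁻¹ - r') (2⁻¹ + r') ⊆
        ((fun t : ℝ => a + t • (b - a)) ⁻¹' closedBall m (σ/2)) := by
      intro t ht
      simp only [Set.mem_preimage, mem_closedBall, dist_eq_norm]
      rw [hm, midpoint_sub a b t]
      rw [norm_smul, Real.norm_eq_abs, ← hL]
      have habs : |t - 2⁻¹| ≤ r' := by
        rw [abs_le]
        constructor <;> [linarith [ht.1]; linarith [ht.2]]
      have h2 : r' * L ≤ σ/2 := by
        have := min_le_left (σ / (2 * L)) 2⁻¹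
        calc r' * L ≤ (σ / (2 * L)) * L := by
              apply mul_le_mul_of_nonneg_right this (norm_nonneg _)
          _ = σ/2 := by field_simp
      calc |t - 2⁻¹| * L ≤ r' * L := mul_le_mul_of_nonneg_right habs (norm_nonneg _)
        _ ≤ σ/2 := h2
    have hmeaspre : MeasurableSet ((fun t : ℝ => a + t • (b - a)) ⁻¹' closedBall m (σ/2)) :=
      measurable_seg a b measurableSet_closedBall
    rw [Measure.restrict_apply hmeaspre]
    have hsub3 : Set.Icc (2⁻¹ - r') (2⁻¹ + r') ⊆
        ((fun t : ℝ => a + t • (b - a)) ⁻¹' closedBall m (σ/2)) ∩ Set.Icc (0:ℝ) 1 := by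
      intro t ht
      refine ⟨hsub2 ht, ?_⟩
      constructor
      · have := ht.1; linarith [hr'le]
      · have := ht.2; linarith [hr'le]
    calc ENNReal.ofReal (2 * r') = volume (Set.Icc (2⁻¹ - r') (2⁻¹ + r')) := by
          rw [Real.volume_Icc]; congr 1; ring
      _ ≤ _ := measure_mono hsub3
  calc ENNReal.ofReal c1 ^ 2 * ENNReal.ofReal ((σ^2)⁻¹) * ENNReal.ofReal (2 * r') * volume V
      = K * ENNReal.ofReal (2 * r') := by rw [hK]; ring
    _ ≤ K * (uniformSeg a b) (closedBall m (σ/2)) := mul_le_mul_right hseg _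



instance inst_s1_2 : IsProbabilityMeasure labelLaw := PMF.toMeasure.isProbabilityMeasure _

lemma labelLaw_singleton (j : Fin 2) : labelLaw {j} = 2⁻¹ := by
  rw [labelLaw, PMF.toMeasure_apply_singleton _ _ (measurableSet_singleton j),
    PMF.uniformOfFintype_apply]
  norm_num

lemma main_bound (N : ℕ) (hN : 2 ≤ N) (P : Fin 2 → Measure E2)
    [hP : ∀ j, IsProbabilityMeasure (P j)] (lam : Measure E2) (hlam : ∀ j, lam ≤ P j)
    (f : (Fin N → E2) → (Fin N → Fin 2)) (hf : Measurable f) :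
    ((Measure.pi fun _ : Fin N => labelLaw).bind fun z =>
      Measure.map (fun x => (z, x)) (Measure.pi fun i => P (z i)))
      {p : (Fin N → Fin 2) × (Fin N → E2) | hamStar (f p.2) p.1 = 0}
      + (N : ℝ≥0∞) * (lam Set.univ * (1 - lam Set.univ)^(N-1)) * 2⁻¹ ≤ 1 := by
  classical
  haveI : IsFiniteMeasure lam := isFiniteMeasure_of_le _ (hlam 0)
  set ε := lam Set.univ with hε
  have hε1 : ε ≤ 1 := by
    rw [hε, ← (hP 0).measure_univ]
    exact (hlam 0) Set.univ
  set Q : Fin 2 → Measure E2 := fun j => P j - lam with hQ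
  haveI hQfin : ∀ j, IsFiniteMeasure (Q j) :=
    fun j => isFiniteMeasure_of_le (P j) Measure.sub_le
  have hPQ : ∀ j, P j = lam + Q j := by
    intro j
    rw [hQ]
    rw [add_comm]
    exact (Measure.sub_add_cancel_of_le (hlam j)).symm
  have hQuniv : ∀ j, Q j Set.univ = 1 - ε := by
    intro j
    rw [hQ]
    simp only
    rw [Measure.sub_apply MeasurableSet.univ (hlam j), (hP j).measure_univ, hε]
  set s : (Fin N → Fin 2) → (Fin N → Fin 2) := fun z i => Equiv.swap 0 1 (z i) with hs
  set B : (Fin N → Fin 2) → Set (Fin N → E2) := fun z => {x | f x = z ∨ f x = s z} with hB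
  have hBmeas : ∀ z, MeasurableSet (B z) := by
    intro z
    have : B z = f ⁻¹' {v | v = z ∨ v = s z} := rfl
    rw [this]
    exact hf ((Set.to_countable _).measurableSet)
  set A := {p : (Fin N → Fin 2) × (Fin N → E2) | hamStar (f p.2) p.1 = 0} with hA
  have hAmeas : MeasurableSet A := by
    have hAeq : A = (fun p : (Fin N → Fin 2) × (Fin N → E2) => (p.1, f p.2)) ⁻¹'
        {q : (Fin N → Fin 2) × (Fin N → Fin 2) | q.2 = q.1 ∨ q.2 = s q.1} := by
      ext p
      simp only [hA, Set.mem_setOf_eq, Set.mem_preimage, hamStar_eq_zero_iff, hs]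
    rw [hAeq]
    exact (measurable_fst.prodMk (hf.comp measurable_snd))
      ((Set.to_countable _).measurableSet)
  -- unfold bind
  rw [Measure.bind_apply hAmeas (measurable_of_countable _).aemeasurable, lintegral_fintype]
  have hsingle : ∀ z : Fin N → Fin 2,
      (Measure.pi fun _ : Fin N => labelLaw) {z} = 2⁻¹ ^ N := by
    intro z
    rw [← Set.univ_pi_singleton z, Measure.pi_pi]
    simp [labelLaw_singleton]
  have hterm : ∀ z : Fin N → Fin 2,
      (Measure.map (fun x => (z, x)) (Measure.pi fun i => P (z i))) A
        = (Measure.pi fun i => P (z i)) (B z) := by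
    intro z
    rw [Measure.map_apply measurable_prodMk_left hAmeas]
    congr 1
    ext x
    simp only [Set.mem_preimage, hA, Set.mem_setOf_eq, hamStar_eq_zero_iff, hB, hs]
  simp_rw [hterm, hsingle]
  -- expansion into subsets
  set μT : Finset (Fin N) → (Fin N → Fin 2) → Measure (Fin N → E2) :=
    fun T z => Measure.pi (fun i => if i ∈ T then lam else Q (z i)) with hμT
  have instT : ∀ (T : Finset (Fin N)) (z : Fin N → Fin 2) (i : Fin N),
      SigmaFinite ((fun i => if i ∈ T then lam else Q (z i)) i) := by
    intro T z i
    simp only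
    split <;> infer_instance
  have hexp : ∀ z, (Measure.pi fun i => P (z i))
      = ∑ T ∈ Finset.univ.powerset, μT T z := by
    intro z
    have h1 : (fun i => P (z i)) = fun i => lam + Q (z i) := funext fun i => hPQ (z i)
    rw [h1]
    exact pi_add_expansion _ _
  set M : Finset (Fin N) → ℝ≥0∞ := fun T => ε ^ T.card * (1-ε) ^ (N - T.card) with hM
  have hμTuniv : ∀ T z, μT T z Set.univ = M T := by
    intro T z
    haveI := instT T z
    rw [hμT]
    simp only
    rw [Measure.pi_univ]
    have h1 : ∀ i : Fin N, ((if i ∈ T then lam else Q (z i)) Set.univ)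
        = if i ∈ T then ε else (1-ε) := by
      intro i
      split
      · rfl
      · exact hQuniv _
    simp_rw [h1]
    rw [Finset.prod_ite, Finset.prod_const, Finset.prod_const]
    have h2 : Finset.univ.filter (fun i => i ∈ T) = T := by ext i; simp
    have h3 : Finset.univ.filter (fun i => ¬ i ∈ T) = Tᶜ := by ext i; simp
    rw [h2, h3, hM, Finset.card_compl, Fintype.card_fin]
  -- per-T bounds
  have htriv : ∀ T z, μT T z (B z) ≤ M T :=
    fun T z => (measure_mono (Set.subset_univ _)).trans_eq (hμTuniv T z)
  -- pairing bound
  have hconstsum : ∀ c : ℝ≥0∞, (∑ _z : Fin N → Fin 2, c) = 2^N * c := by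
    intro c
    rw [Finset.sum_const, Finset.card_univ, Fintype.card_fun, Fintype.card_fin,
      Fintype.card_fin, nsmul_eq_mul]
    norm_num
  have hpair : ∀ i : Fin N, (∑ z : Fin N → Fin 2, μT {i} z (B z))
      + (∑ z : Fin N → Fin 2, μT {i} z (B z)) ≤ (2:ℝ≥0∞)^N * M {i} := by
    intro i
    set φ : (Fin N → Fin 2) → (Fin N → Fin 2) :=
      fun z => Function.update z i (Equiv.swap 0 1 (z i)) with hφ
    have hφi : ∀ z, φ z i = Equiv.swap 0 1 (z i) := by
      intro z; rw [hφ]; simp [Function.update_self]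
    have hφj : ∀ z j, j ≠ i → φ z j = z j := by
      intro z j hj; rw [hφ]; simp [Function.update_of_ne hj]
    have hφφ : Function.Involutive φ := by
      intro z; funext j
      by_cases h : j = i
      · subst h; rw [hφi, hφi, Equiv.swap_apply_self]
      · rw [hφj _ _ h, hφj _ _ h]
    have hμφ : ∀ z, μT {i} (φ z) = μT {i} z := by
      intro z
      rw [hμT]
      simp only
      congr 1
      funext j
      by_cases h : j ∈ ({i} : Finset (Fin N))
      · simp [h]
      · have hji : j ≠ i := by simpa using h
        rw [if_neg h, if_neg h, hφj _ _ hji]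
    have hφne : ∀ z, B z ∩ B (φ z) = ∅ := by
      intro z
      obtain ⟨j, hj⟩ : ∃ j : Fin N, j ≠ i := by
        haveI : Nontrivial (Fin N) := Fin.nontrivial_iff_two_le.mpr hN
        exact exists_ne i
      apply Set.eq_empty_iff_forall_notMem.mpr
      rintro x ⟨hx1, hx2⟩
      rw [hB, Set.mem_setOf_eq] at hx1 hx2
      rcases hx1 with h1 | h1 <;> rcases hx2 with h2 | h2
      · have := congrFun (h1.symm.trans h2) i
        rw [hφi] at this
        exact swap_ne (z i) this.symm
      · have := congrFun (h1.symm.trans h2) j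
        rw [hs] at this
        simp only at this
        rw [hφj _ _ hj] at this
        exact swap_ne (z j) this.symm
      · have := congrFun (h1.symm.trans h2) j
        rw [hs] at this
        simp only at this
        rw [hφj _ _ hj] at this
        exact swap_ne (z j) this
      · have := congrFun (h1.symm.trans h2) i
        rw [hs] at this
        simp only at this
        rw [hφi] at this
        have h3 := (Equiv.swap 0 1).injective this
        exact swap_ne (z i) h3.symm
    have hre : (∑ z : Fin N → Fin 2, μT {i} z (B z))
        = ∑ z : Fin N → Fin 2, μT {i} z (B (φ z)) := by
      refine Fintype.sum_bijective φ hφφ.bijective _ _ ?_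
      intro x
      rw [hμφ x, hφφ x]
    nth_rewrite 2 [hre]
    rw [← Finset.sum_add_distrib]
    have hstep : ∀ z : Fin N → Fin 2,
        μT {i} z (B z) + μT {i} z (B (φ z)) ≤ M {i} := by
      intro z
      rw [← measure_union (Set.disjoint_iff_inter_eq_empty.mpr (hφne z)) (hBmeas (φ z))]
      exact (measure_mono (Set.subset_univ _)).trans_eq (hμTuniv _ _)
    calc ∑ z : Fin N → Fin 2, (μT {i} z (B z) + μT {i} z (B (φ z)))
        ≤ ∑ _z : Fin N → Fin 2, M {i} := Finset.sum_le_sum (fun z _ => hstep z)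
      _ = 2^N * M {i} := hconstsum _
  have hNpos : 0 < N := lt_of_lt_of_le (by norm_num) hN
  have hpow : (2:ℝ≥0∞)^N = 2^(N-1) * 2 := by
    conv_rhs => rw [← pow_succ]
    rw [Nat.sub_add_cancel (by omega : 1 ≤ N)]
  have hsingbound : ∀ T : Finset (Fin N), T.card = 1 →
      (∑ z : Fin N → Fin 2, μT T z (B z)) + 2^(N-1) * M T ≤ 2^N * M T := by
    intro T hT
    obtain ⟨i, rfl⟩ := Finset.card_eq_one.mp hT
    have h2 := hpair i
    have h2N : (2:ℝ≥0∞)^N * M {i} = (2^(N-1) * M {i}) + (2^(N-1) * M {i}) := by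
      rw [hpow]; ring
    have hW : (∑ z : Fin N → Fin 2, μT {i} z (B z)) ≤ 2^(N-1) * M {i} := by
      rw [h2N, ← two_mul, ← two_mul] at h2
      exact (ENNReal.mul_le_mul_iff_right (by norm_num) (by norm_num)).mp h2
    rw [h2N]
    exact add_le_add_left hW _
  have hperT : ∀ T ∈ Finset.univ.powerset,
      (∑ z : Fin N → Fin 2, μT T z (B z))
        + (if T.card = 1 then (2:ℝ≥0∞)^(N-1) * M T else 0) ≤ 2^N * M T := by
    intro T _
    split
    · exact hsingbound T ‹_›
    · rw [add_zero]
      calc (∑ z : Fin N → Fin 2, μT T z (B z)) ≤ ∑ _z : Fin N → Fin 2, M T :=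
            Finset.sum_le_sum (fun z _ => htriv T z)
        _ = 2^N * M T := hconstsum _
  -- sum the per-T bounds
  have hMone : (∑ T ∈ Finset.univ.powerset, M T) = 1 := by
    have hprod := Finset.prod_add (fun _ : Fin N => ε) (fun _ : Fin N => (1-ε))
      (Finset.univ : Finset (Fin N))
    have hlhs : (∏ _i : Fin N, (ε + (1-ε))) = 1 := by
      have : ε + (1-ε) = 1 := by
        rw [add_comm]; exact tsub_add_cancel_of_le hε1
      rw [this]; exact Finset.prod_const_one
    have hMT : ∀ T ∈ Finset.univ.powerset,
        M T = (∏ _i ∈ T, ε) * ∏ _i ∈ Finset.univ \ T, (1-ε) := by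
      intro T _
      rw [Finset.prod_const, Finset.prod_const,
        Finset.card_sdiff_of_subset (Finset.subset_univ T), Finset.card_univ, Fintype.card_fin]
    rw [Finset.sum_congr rfl hMT, ← hprod]
    exact hlhs
  have hsuming : (∑ T ∈ Finset.univ.powerset,
      (if T.card = 1 then (2:ℝ≥0∞)^(N-1) * M T else 0))
      = (N:ℝ≥0∞) * (2^(N-1) * (ε * (1-ε)^(N-1))) := by
    rw [← Finset.sum_filter, ← Finset.powersetCard_eq_filter]
    have hval : ∀ T ∈ Finset.powersetCard 1 (Finset.univ : Finset (Fin N)),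
        (2:ℝ≥0∞)^(N-1) * M T = 2^(N-1) * (ε * (1-ε)^(N-1)) := by
      intro T hT
      have hTcard : T.card = 1 := (Finset.mem_powersetCard.mp hT).2
      simp only [hM]
      rw [hTcard, pow_one]
    rw [Finset.sum_congr rfl hval, Finset.sum_const, Finset.card_powersetCard,
      Finset.card_univ, Fintype.card_fin, Nat.choose_one_right, nsmul_eq_mul]
  have hsumT : (∑ T ∈ Finset.univ.powerset, ∑ z : Fin N → Fin 2, μT T z (B z))
      + (N:ℝ≥0∞) * (2^(N-1) * (ε * (1-ε)^(N-1))) ≤ 2^N := by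
    rw [← hsuming, ← Finset.sum_add_distrib]
    calc _ ≤ ∑ T ∈ Finset.univ.powerset, (2:ℝ≥0∞)^N * M T := Finset.sum_le_sum hperT
      _ = 2^N * ∑ T ∈ Finset.univ.powerset, M T := by rw [Finset.mul_sum]
      _ = 2^N := by rw [hMone, mul_one]
  -- finish: multiply by 2⁻¹ ^ N
  have hz : ∀ z : Fin N → Fin 2, (Measure.pi fun i => P (z i)) (B z)
      = ∑ T ∈ Finset.univ.powerset, μT T z (B z) := by
    intro z
    rw [hexp z, Measure.finset_sum_apply]
  simp_rw [hz]
  rw [← Finset.sum_mul, Finset.sum_comm]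
  have hfin := mul_le_mul_left hsumT ((2:ℝ≥0∞)⁻¹ ^ N)
  have h2cancel : (2:ℝ≥0∞)^N * 2⁻¹^N = 1 := by
    rw [← mul_pow]
    rw [ENNReal.mul_inv_cancel (by norm_num) (by norm_num)]
    exact one_pow N
  have h2half : (2:ℝ≥0∞)^(N-1) * 2⁻¹^N = 2⁻¹ := by
    have : (2:ℝ≥0∞)⁻¹^N = 2⁻¹^(N-1) * 2⁻¹ := by
      conv_rhs => rw [← pow_succ]
      rw [Nat.sub_add_cancel (by omega : 1 ≤ N)]
    rw [this, ← mul_assoc, ← mul_pow,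
      ENNReal.mul_inv_cancel (by norm_num) (by norm_num), one_pow, one_mul]
  have hre2 : (↑N * (2^(N-1) * (ε * (1-ε)^(N-1)))) * (2:ℝ≥0∞)⁻¹^N
      = ↑N * (ε * (1-ε)^(N-1)) * (2^(N-1) * 2⁻¹^N) := by ring
  rw [add_mul, h2cancel, hre2, h2half] at hfin
  exact hfin



def gconst : ℝ := c1^2 * (volume (ball (0:E2) 1)).toReal / 2

lemma ballvol_pos : 0 < (volume (ball (0:E2) 1)).toReal := by
  apply ENNReal.toReal_pos
  · exact (measure_ball_pos volume (0:E2) one_pos).ne'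
  · exact measure_ball_lt_top.ne

lemma gconst_pos : 0 < gconst := by
  have := c1_pos
  have := ballvol_pos
  unfold gconst
  positivity

def gfun (L σ : ℝ) : ℝ := gconst * min (σ / (2*L)) 2⁻¹

lemma gfun_pos {L σ : ℝ} (hL : 0 < L) (hσ : 0 < σ) : 0 < gfun L σ :=
  mul_pos gconst_pos (lt_min (by positivity) (by norm_num))

lemma lam_exists (a₁ b₁ a₂ b₂ : E2) (hlen : ‖b₁ - a₁‖ = ‖b₂ - a₂‖)
    (hpos : 0 < ‖b₁ - a₁‖) (hmid : midpoint ℝ a₁ b₁ = midpoint ℝ a₂ b₂)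
    (σN : ℝ) (hσN : 0 < σN) :
    ∃ lam : Measure E2, lam ≤ obsLaw a₁ b₁ σN ∧ lam ≤ obsLaw a₂ b₂ σN ∧
      lam Set.univ = ENNReal.ofReal (gfun ‖b₁ - a₁‖ σN) := by
  set L := ‖b₁ - a₁‖ with hL
  set m := midpoint ℝ a₁ b₁ with hm
  set κ := ENNReal.ofReal c1 ^ 2 * ENNReal.ofReal ((σN^2)⁻¹) *
      ENNReal.ofReal (2 * min (σN / (2 * L)) 2⁻¹) with hκ
  refine ⟨κ • volume.restrict (ball m (σN/2)), ?_, ?_, ?_⟩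
  · rw [Measure.le_iff]
    intro S hS
    rw [Measure.smul_apply, smul_eq_mul, Measure.restrict_apply hS]
    exact obs_ge a₁ b₁ σN hσN hpos S hS
  · rw [Measure.le_iff]
    intro S hS
    rw [Measure.smul_apply, smul_eq_mul, Measure.restrict_apply hS]
    have h2 := obs_ge a₂ b₂ σN hσN (hlen ▸ hpos) S hS
    rw [← hlen, ← hmid] at h2
    exact h2
  · rw [Measure.smul_apply, smul_eq_mul, Measure.restrict_apply MeasurableSet.univ,
      Set.univ_inter]
    rw [Measure.addHaar_ball volume m (by positivity : (0:ℝ) ≤ σN/2),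
      finrank_euclideanSpace_fin]
    set v := (volume (ball (0:E2) 1)).toReal with hv
    have hV : volume (ball (0:E2) 1) = ENNReal.ofReal v :=
      (ENNReal.ofReal_toReal measure_ball_lt_top.ne).symm
    rw [hV, hκ]
    have hr' : (0:ℝ) ≤ min (σN / (2 * L)) 2⁻¹ :=
      le_min (by positivity) (by norm_num)
    rw [← ENNReal.ofReal_pow c1_pos.le, ← ENNReal.ofReal_mul (by positivity),
      ← ENNReal.ofReal_mul (by positivity), ← ENNReal.ofReal_mul (by positivity),
      ← ENNReal.ofReal_mul (by positivity)]
    congr 1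
    have hv0 : 0 ≤ v := ballvol_pos.le
    unfold gfun gconst
    field_simp
    ring

lemma perN (a₁ b₁ a₂ b₂ : E2) (hlen : ‖b₁ - a₁‖ = ‖b₂ - a₂‖) (hpos : 0 < ‖b₁ - a₁‖)
    (hmid : midpoint ℝ a₁ b₁ = midpoint ℝ a₂ b₂) (σN : ℝ) (hσN : 0 < σN)
    (N : ℕ) (hN2 : 2 ≤ N) (c₀ : ℝ) (hc₀pos : 0 < c₀) (hc₀4 : c₀ ≤ 4⁻¹)
    (hc₀N : c₀ ≤ N * gfun ‖b₁ - a₁‖ σN)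
    (f : (Fin N → E2) → (Fin N → Fin 2)) (hf : Measurable f) :
    GLMM N a₁ b₁ a₂ b₂ σN {p | hamStar (f p.2) p.1 = 0} + ENNReal.ofReal (c₀/4) ≤ 1 := by
  classical
  obtain ⟨lam0, hle1, hle2, huniv⟩ := lam_exists a₁ b₁ a₂ b₂ hlen hpos hmid σN hσN
  set g := gfun ‖b₁ - a₁‖ σN with hg
  have hg0 : 0 < g := gfun_pos hpos hσN
  have hN0 : (0:ℝ) < N := by positivity
  set e' : ℝ := min g (c₀ / N) with he'
  have he'pos : 0 < e' := lt_min hg0 (by positivity)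
  have he'leg : e' ≤ g := min_le_left _ _
  have he'lecN : e' ≤ c₀ / N := min_le_right _ _
  have hNe' : (N:ℝ) * e' = c₀ := by
    rw [he', mul_min_of_nonneg _ _ hN0.le, mul_div_cancel₀ _ hN0.ne']
    exact min_eq_right (by linarith [hc₀N])
  have he'1 : e' ≤ 4⁻¹ := by
    have h1 : c₀ / N ≤ c₀ := by
      apply div_le_self hc₀pos.le
      exact_mod_cast le_trans (by norm_num) hN2
    linarith [he'lecN]
  set lam := ENNReal.ofReal (e'/g) • lam0 with hlam
  have hlamle : ∀ (ρ : Measure E2), lam0 ≤ ρ → lam ≤ ρ := by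
    intro ρ h
    rw [Measure.le_iff']
    intro S
    rw [hlam, Measure.smul_apply, smul_eq_mul]
    calc ENNReal.ofReal (e'/g) * lam0 S ≤ 1 * lam0 S := by
          apply mul_le_mul_left
          rw [ENNReal.ofReal_le_one]
          rw [div_le_one hg0]
          exact he'leg
      _ = lam0 S := one_mul _
      _ ≤ ρ S := h S
  have hlamuniv : lam Set.univ = ENNReal.ofReal e' := by
    rw [hlam, Measure.smul_apply, smul_eq_mul, huniv, ← ENNReal.ofReal_mul (by positivity),
      div_mul_cancel₀ _ hg0.ne']
  set P : Fin 2 → Measure E2 := fun j => if j = 0 then obsLaw a₁ b₁ σN else obsLaw a₂ b₂ σN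
    with hPdef
  haveI hP : ∀ j, IsProbabilityMeasure (P j) := by
    intro j
    rw [hPdef]
    by_cases h : j = 0 <;> simp only [h, if_true, if_false] <;> infer_instance
  have hlamP : ∀ j, lam ≤ P j := by
    intro j
    rw [hPdef]
    by_cases h : j = 0 <;> simp only [h, if_true, if_false]
    · exact hlamle _ hle1
    · exact hlamle _ hle2
  have key := main_bound N hN2 P lam hlamP f hf
  have hGLMM : GLMM N a₁ b₁ a₂ b₂ σN = (Measure.pi fun _ : Fin N => labelLaw).bind
      fun z => Measure.map (fun x => (z, x)) (Measure.pi fun i => P (z i)) := by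
    have hfam : ∀ z : Fin N → Fin 2, (fun i : Fin N => if z i = 0 then obsLaw a₁ b₁ σN
        else obsLaw a₂ b₂ σN) = fun i => P (z i) := by
      intro z; funext i; rw [hPdef]
    unfold GLMM
    refine congrArg ((Measure.pi fun _ : Fin N => labelLaw).bind) (funext fun z => ?_)
    rw [hfam z]
  rw [hGLMM]
  refine le_trans (add_le_add_right ?_ _) key
  -- now: ofReal (c₀/4) ≤ N * (lam univ * (1 - lam univ)^(N-1)) * 2⁻¹
  rw [hlamuniv]
  have hsub : (1:ℝ≥0∞) - ENNReal.ofReal e' = ENNReal.ofReal (1 - e') := by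
    rw [ENNReal.ofReal_sub _ he'pos.le, ENNReal.ofReal_one]
  rw [hsub, ← ENNReal.ofReal_pow (by linarith : (0:ℝ) ≤ 1 - e'),
    ← ENNReal.ofReal_mul he'pos.le]
  have hNcast : (N:ℝ≥0∞) = ENNReal.ofReal (N:ℝ) := by
    rw [ENNReal.ofReal_natCast]
  rw [hNcast, ← ENNReal.ofReal_mul (Nat.cast_nonneg N)]
  have h2inv : (2:ℝ≥0∞)⁻¹ = ENNReal.ofReal 2⁻¹ := by
    rw [ENNReal.ofReal_inv_of_pos (by norm_num : (0:ℝ) < 2)]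
    norm_num
  rw [h2inv, ← ENNReal.ofReal_mul (mul_nonneg (Nat.cast_nonneg N)
    (mul_nonneg he'pos.le (pow_nonneg (by linarith) _)))]
  apply ENNReal.ofReal_le_ofReal
  -- real inequality
  have hbern : 1 - (N-1:ℝ) * e' ≤ (1 - e')^(N-1) := by
    have h := one_add_mul_le_pow (a := -e') (by linarith) (N-1)
    have hcast : ((N-1 : ℕ):ℝ) = (N:ℝ) - 1 := by
      rw [Nat.cast_sub (by omega : 1 ≤ N)]
      norm_num
    rw [hcast] at h
    calc 1 - ((N:ℝ)-1) * e' = 1 + ((N:ℝ)-1) * (-e') := by ring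
      _ ≤ (1 + -e')^(N-1) := h
      _ = (1 - e')^(N-1) := by rw [sub_eq_add_neg]
  have hlow : (1:ℝ)/2 ≤ (1 - e')^(N-1) := by
    have h1 : ((N:ℝ)-1) * e' ≤ (N:ℝ) * e' := by nlinarith
    have h2 : (N:ℝ) * e' = c₀ := hNe'
    nlinarith
  calc c₀/4 = c₀ * (1/2) * 2⁻¹ := by ring
    _ ≤ ((N:ℝ) * e') * (1 - e')^(N-1) * 2⁻¹ := by
        rw [hNe']
        have : c₀ * (1/2) ≤ c₀ * (1 - e')^(N-1) :=
          mul_le_mul_of_nonneg_left hlow hc₀pos.le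
        nlinarith
    _ = (N:ℝ) * (e' * (1 - e')^(N-1)) * 2⁻¹ := by ring

/-- exact recovery is impossible when liminf N·σ_N > 0. -/
theorem exact_recovery_impossible
    (a₁ b₁ a₂ b₂ : E2)
    (hlen : ‖b₁ - a₁‖ = ‖b₂ - a₂‖) (hpos : 0 < ‖b₁ - a₁‖)
    (hmid : midpoint ℝ a₁ b₁ = midpoint ℝ a₂ b₂)
    (hdist : segment ℝ a₁ b₁ ≠ segment ℝ a₂ b₂)
    (σ : ℕ → ℝ) (hσpos : ∀ N, 0 < σ N)
    (hσ : 0 < Filter.liminf (fun N : ℕ => (N : ℝ) * σ N) atTop) :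
    ∀ zhat : (N : ℕ) → (Fin N → E2) → (Fin N → Fin 2),
      (∀ N, Measurable (zhat N)) →
      ¬ Tendsto
        (fun N : ℕ => GLMM N a₁ b₁ a₂ b₂ (σ N) {p | hamStar (zhat N p.2) p.1 = 0})
        atTop (nhds 1) := by
  intro zhat hzhat htend
  set L := ‖b₁ - a₁‖ with hLdef
  have hLpos : 0 < L := hpos
  -- extract a positive eventual lower bound on N * σ N from the liminf hypothesis
  obtain ⟨c, hcmem, hcpos⟩ : ∃ c : ℝ, (∀ᶠ (n:ℕ) in atTop, c ≤ (n:ℝ) * σ n) ∧ 0 < c := by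
    by_contra h
    push_neg at h
    rw [Filter.liminf_eq] at hσ
    have hle : sSup {a : ℝ | ∀ᶠ (n:ℕ) in atTop, a ≤ (n:ℝ) * σ n} ≤ 0 := by
      apply csSup_le
      · exact ⟨0, Filter.Eventually.of_forall
          (fun n => mul_nonneg (Nat.cast_nonneg n) (hσpos n).le)⟩
      · intro x hx
        exact h x hx
    exact absurd hσ (not_lt.mpr hle)
  set c₀ := min (gconst * min (c/(2*L)) 2⁻¹) 4⁻¹ with hc₀def
  have hc₀pos : 0 < c₀ :=
    lt_min (mul_pos gconst_pos (lt_min (by positivity) (by norm_num))) (by norm_num)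
  have hc₀4 : c₀ ≤ 4⁻¹ := min_le_right _ _
  have hev : ∀ᶠ N in atTop,
      GLMM N a₁ b₁ a₂ b₂ (σ N) {p | hamStar (zhat N p.2) p.1 = 0}
        + ENNReal.ofReal (c₀/4) ≤ 1 := by
    filter_upwards [hcmem, eventually_ge_atTop 2] with N hcN hN2
    refine perN a₁ b₁ a₂ b₂ hlen hpos hmid (σ N) (hσpos N) N hN2 c₀ hc₀pos hc₀4 ?_
      (zhat N) (hzhat N)
    have hα : (N:ℝ) * gfun L (σ N) = gconst * ((N:ℝ) * min (σ N/(2*L)) 2⁻¹) := by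
      unfold gfun; ring
    have hβ : (N:ℝ) * min (σ N/(2*L)) 2⁻¹
        = min ((N:ℝ) * σ N/(2*L)) ((N:ℝ) * 2⁻¹) := by
      rw [mul_min_of_nonneg _ _ (Nat.cast_nonneg N)]
      congr 1
      ring
    have hN1 : (1:ℝ) ≤ (N:ℝ) := by exact_mod_cast le_trans (by norm_num) hN2
    have hγ : min (c/(2*L)) 2⁻¹ ≤ min ((N:ℝ)*σ N/(2*L)) ((N:ℝ)*2⁻¹) := by
      apply le_min
      · refine le_trans (min_le_left _ _) ?_
        exact (div_le_div_iff_of_pos_right (by positivity)).mpr hcN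
      · refine le_trans (min_le_right _ _) ?_
        nlinarith
    calc c₀ ≤ gconst * min (c/(2*L)) 2⁻¹ := min_le_left _ _
      _ ≤ gconst * min ((N:ℝ)*σ N/(2*L)) ((N:ℝ)*2⁻¹) :=
          mul_le_mul_of_nonneg_left hγ gconst_pos.le
      _ = (N:ℝ) * gfun L (σ N) := by rw [hα, hβ]
  have hδpos : (0:ℝ≥0∞) < ENNReal.ofReal (c₀/4) := ENNReal.ofReal_pos.mpr (by positivity)
  have hlt1 : (1:ℝ≥0∞) - ENNReal.ofReal (c₀/4) < 1 :=
    ENNReal.sub_lt_self ENNReal.one_ne_top one_ne_zero hδpos.ne'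
  have hev2 := htend.eventually (lt_mem_nhds hlt1)
  obtain ⟨N, h1, h2⟩ := (hev.and hev2).exists
  have h3 : GLMM N a₁ b₁ a₂ b₂ (σ N) {p | hamStar (zhat N p.2) p.1 = 0}
      ≤ 1 - ENNReal.ofReal (c₀/4) := ENNReal.le_sub_of_add_le_right ENNReal.ofReal_ne_top h1
  exact absurd (lt_of_lt_of_le h2 h3) (lt_irrefl _)
end exp
end
end

section
/- Let σ > 0, let L ⊆ ℝ² be an affine line (one-dimensional affine subspace), let u₁, u₂, u₃ ∈ L, let Y₁, Y₂, Y₃ be i.i.d. standard Gaussian vectors on ℝ² (mean 0, identity covariance), and set X_i = u_i + σ·Y_i for i = 1,2,3. Then for every t > √3·σ, P(σ²_TLS(X₁, X₂, X₃) ≥ t²) ≤ exp(−(3/2)·(t²/(3σ²) − 1 − log(t²/(3σ²)))). -/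
open MeasureTheory ProbabilityTheory Filter

noncomputable section

/-- The affine line through `p` with (nonzero) direction `v`. -/
def lineSet (p v : E2) : Set E2 := {x | ∃ t : ℝ, x = p + t • v}

/-- Total least squares score: infimum over all affine lines of the sum of
squared Euclidean distances from the three points to the line. -/
def tlsScore (x₁ x₂ x₃ : E2) : ℝ :=
  sInf {s : ℝ | ∃ p v : E2, v ≠ 0 ∧
    s = Metric.infDist x₁ (lineSet p v) ^ 2 + Metric.infDist x₂ (lineSet p v) ^ 2 +
        Metric.infDist x₃ (lineSet p v) ^ 2}

open Real

/-! ### Auxiliary real Gaussian integral computations -/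

lemma rexp_quad_integrable {b : ℝ} (hb : b < 0) (c d : ℝ) :
    Integrable fun x : ℝ => rexp (b * x ^ 2 + c * x + d) := by
  have h := (integrable_cexp_quadratic' (b := (b : ℂ)) (by simpa using hb) c d).norm
  refine h.congr (Filter.Eventually.of_forall fun x => ?_)
  show ‖Complex.exp (↑b * ↑x ^ 2 + ↑c * ↑x + ↑d)‖ = rexp (b * x ^ 2 + c * x + d)
  rw [show ((b:ℂ) * x ^ 2 + c * x + d) = ((b * x ^ 2 + c * x + d : ℝ) : ℂ) by push_cast; ring,
    ← Complex.ofReal_exp, Complex.norm_real, Real.norm_eq_abs, abs_of_pos (Real.exp_pos _)]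

lemma int_ofReal {α : Type*} [MeasurableSpace α] {μ : Measure α} {f : α → ℝ} :
    ∫ x, ((f x : ℝ) : ℂ) ∂μ = ((∫ x, f x ∂μ : ℝ) : ℂ) := integral_ofReal

lemma rexp_quad_integral {b : ℝ} (hb : b < 0) (c d : ℝ) :
    ∫ x : ℝ, rexp (b * x ^ 2 + c * x + d)
      = Real.sqrt (π / (-b)) * rexp (d - c ^ 2 / (4 * b)) := by
  have h := integral_cexp_quadratic (b := (b : ℂ)) (by simpa using hb) c d
  have hl : (∫ x : ℝ, Complex.exp (↑b * ↑x ^ 2 + ↑c * ↑x + ↑d))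
      = ((∫ x : ℝ, rexp (b * x ^ 2 + c * x + d) : ℝ) : ℂ) := by
    rw [← int_ofReal]
    congr 1; funext x
    rw [show ((b:ℂ) * x ^ 2 + c * x + d) = ((b * x ^ 2 + c * x + d : ℝ) : ℂ) by push_cast; ring,
      ← Complex.ofReal_exp]
  have h2 : 0 ≤ π / (-b) := div_nonneg pi_pos.le (by linarith)
  have hr : ((↑π / -(b:ℂ)) ^ (1/2 : ℂ) * Complex.exp (↑d - ↑c ^ 2 / (4 * ↑b)))
      = ((Real.sqrt (π / (-b)) * rexp (d - c ^ 2 / (4 * b)) : ℝ) : ℂ) := by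
    have h1 : (↑π / -(b:ℂ)) = ((π / (-b) : ℝ) : ℂ) := by push_cast; ring
    have h3 : ((π / -b : ℝ) : ℂ) ^ (1/2 : ℂ) = ((((π / -b) ^ (1/2:ℝ) : ℝ)) : ℂ) := by
      rw [Complex.ofReal_cpow h2]; norm_num
    rw [h1, h3, ← Real.sqrt_eq_rpow,
      show ((d:ℂ) - c ^ 2 / (4 * b)) = ((d - c ^ 2 / (4 * b) : ℝ) : ℂ) by push_cast; ring,
      ← Complex.ofReal_exp, ← Complex.ofReal_mul]
  rw [hl, hr] at h
  exact_mod_cast h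

/-- Moment generating function of the square of a Gaussian. -/
lemma gauss_sq_exp (m : ℝ) (v : NNReal) {l : ℝ} (hl : 0 ≤ l) (hlv : 2 * l * v < 1) :
    Integrable (fun x => rexp (l * x ^ 2)) (gaussianReal m v) ∧
    ∫ x, rexp (l * x ^ 2) ∂(gaussianReal m v)
      = (Real.sqrt (1 - 2 * l * v))⁻¹ * rexp (l * m ^ 2 / (1 - 2 * l * v)) := by
  rcases eq_or_ne v 0 with hv | hv
  · subst hv
    rw [gaussianReal_zero_var]
    constructor
    · exact (integrable_const _).congr (ae_eq_dirac fun x => rexp (l * x ^ 2)).symm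
    · rw [integral_dirac]
      norm_num
  have hV : (0:ℝ) < v := by positivity
  set V : ℝ := (v : ℝ) with hVdef
  have h1 : (0:ℝ) < 1 - 2 * l * V := by
    have : 2 * l * V < 1 := hlv
    linarith
  set b : ℝ := l - 1 / (2 * V) with hbdef
  have hb : b < 0 := by
    rw [hbdef]
    rw [sub_neg]
    rw [lt_div_iff₀ (by linarith)]
    nlinarith
  set c : ℝ := m / V with hcdef
  set d : ℝ := -(m ^ 2) / (2 * V) with hddef
  have hprod : ∀ x : ℝ, gaussianPDFReal m v x * rexp (l * x ^ 2)
      = (Real.sqrt (2 * π * V))⁻¹ * rexp (b * x ^ 2 + c * x + d) := by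
    intro x
    rw [gaussianPDFReal]
    rw [mul_assoc, ← Real.exp_add]
    congr 2
    rw [hbdef, hcdef, hddef]
    field_simp
    ring
  have hint : Integrable (fun x : ℝ => gaussianPDFReal m v x * rexp (l * x ^ 2)) := by
    simp_rw [hprod]
    exact (rexp_quad_integrable hb c d).const_mul _
  have hmeas : Measurable fun x => (gaussianPDFReal m v x).toNNReal :=
    (measurable_gaussianPDFReal m v).real_toNNReal
  have hwd : gaussianReal m v = (volume : Measure ℝ).withDensity
      (fun x => ((gaussianPDFReal m v x).toNNReal : ENNReal)) := by
    rw [gaussianReal_of_var_ne_zero m hv]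
    congr 1
  have hsmul : ∀ x : ℝ, (gaussianPDFReal m v x).toNNReal • rexp (l * x ^ 2)
      = gaussianPDFReal m v x * rexp (l * x ^ 2) := by
    intro x
    rw [NNReal.smul_def, Real.coe_toNNReal _ (gaussianPDFReal_nonneg m v x), smul_eq_mul]
  constructor
  · rw [hwd, integrable_withDensity_iff_integrable_smul hmeas]
    refine hint.congr (Filter.Eventually.of_forall fun x => (hsmul x).symm)
  · rw [hwd, integral_withDensity_eq_integral_smul hmeas]
    simp_rw [hsmul, hprod]
    rw [integral_const_mul, rexp_quad_integral hb c d]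
    have hnb : -b = (1 - 2 * l * V) / (2 * V) := by
      rw [hbdef]; field_simp; ring
    have e1 : π / (-b) = (2 * π * V) / (1 - 2 * l * V) := by
      rw [hnb, div_div_eq_mul_div]; ring
    have e2 : d - c ^ 2 / (4 * b) = l * m ^ 2 / (1 - 2 * l * V) := by
      have h4b : 4 * b = (-2) * (1 - 2 * l * V) / V := by
        rw [hbdef]; field_simp; ring
      rw [hcdef, hddef, h4b]
      field_simp [h1.ne']
      have hX : (1 - V * l * 2) * (1 - V * l * 2)⁻¹ = 1 := mul_inv_cancel₀ (ne_of_gt (by linarith))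
      linear_combination m ^ 2 * hX
    rw [e1, e2, Real.sqrt_div (by positivity : (0:ℝ) ≤ 2 * π * V) _]
    have hs : Real.sqrt (2 * π * V) ≠ 0 := by positivity
    field_simp

/-- Moment generating function of the square of a shifted and scaled Gaussian. -/
lemma gauss_shift (b m : ℝ) {l : ℝ} (hl : 0 ≤ l) (h : 2 * l * b ^ 2 < 1) :
    Integrable (fun y => rexp (l * (b * y + m) ^ 2)) (gaussianReal 0 1) ∧
    ∫ y, rexp (l * (b * y + m) ^ 2) ∂(gaussianReal 0 1)
      = (Real.sqrt (1 - 2 * l * b ^ 2))⁻¹ * rexp (l * m ^ 2 / (1 - 2 * l * b ^ 2)) := by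
  have hvb : ((⟨b ^ 2, sq_nonneg b⟩ : NNReal) : ℝ) = b ^ 2 := rfl
  have hmap : Measure.map (fun y : ℝ => b * y + m) (gaussianReal 0 1)
      = gaussianReal m ⟨b ^ 2, sq_nonneg b⟩ := by
    have h1 : (fun y : ℝ => b * y + m) = (fun x : ℝ => x + m) ∘ (fun y : ℝ => b * y) := rfl
    rw [h1, ← Measure.map_map (by fun_prop) (by fun_prop),
      gaussianReal_map_const_mul b, gaussianReal_map_add_const m]
    norm_num
    rfl
  have hmeasq : AEStronglyMeasurable (fun x : ℝ => rexp (l * x ^ 2))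
      (Measure.map (fun y : ℝ => b * y + m) (gaussianReal 0 1)) := by
    exact (Continuous.aestronglyMeasurable (by fun_prop))
  have hcomp : (fun x : ℝ => rexp (l * x ^ 2)) ∘ (fun y : ℝ => b * y + m)
      = fun y => rexp (l * (b * y + m) ^ 2) := rfl
  have h2 : 2 * l * ((⟨b ^ 2, sq_nonneg b⟩ : NNReal) : ℝ) < 1 := by rw [hvb]; exact h
  obtain ⟨hint, hval⟩ := gauss_sq_exp m ⟨b ^ 2, sq_nonneg b⟩ hl h2
  constructor
  · rw [← hcomp, ← integrable_map_measure hmeasq (by fun_prop)]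
    rw [hmap]; exact hint
  · have hh := integral_map (μ := gaussianReal 0 1) (φ := fun y : ℝ => b * y + m)
      (f := fun x : ℝ => rexp (l * x ^ 2)) (by fun_prop) hmeasq
    rw [hmap] at hh
    rw [← hh, hval]; rfl

lemma inner_symm_apply (z : Fin 2 → ℝ) (n : E2) :
    (inner ℝ ((MeasurableEquiv.toLp 2 (Fin 2 → ℝ)) z) n : ℝ) = z 0 * n 0 + z 1 * n 1 := by
  have hz : ∀ i, (MeasurableEquiv.toLp 2 (Fin 2 → ℝ)) z i = z i := fun _ => rfl
  rw [PiLp.inner_apply]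
  simp only [RCLike.inner_apply, starRingEnd_apply, star_trivial, Fin.sum_univ_two, hz]
  ring

/-- MGF of the squared projection of a 2D standard Gaussian on a unit vector. -/
lemma e2_exp (n : E2) (hn : n 0 ^ 2 + n 1 ^ 2 = 1) {l : ℝ} (hl : 0 ≤ l) (hl2 : l < 1 / 2) :
    Integrable (fun y : E2 => rexp (l * (inner ℝ y n : ℝ) ^ 2)) stdGaussian2 ∧
    ∫ y, rexp (l * (inner ℝ y n : ℝ) ^ 2) ∂stdGaussian2 = (Real.sqrt (1 - 2 * l))⁻¹ := by
  set γ := gaussianReal 0 1 with hγ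
  have hn0 : n 0 ^ 2 ≤ 1 := by nlinarith [sq_nonneg (n 1)]
  have hn1 : n 1 ^ 2 ≤ 1 := by nlinarith [sq_nonneg (n 0)]
  have hA : 0 < 1 - 2 * l * n 1 ^ 2 := by nlinarith
  set l₂ : ℝ := l * n 0 ^ 2 / (1 - 2 * l * n 1 ^ 2) with hl₂def
  have hl₂ : 0 ≤ l₂ := by positivity
  have hl₂2 : 2 * l₂ * (1:ℝ) ^ 2 < 1 := by
    rw [hl₂def, one_pow, mul_one, ← mul_div_assoc, div_lt_one hA]
    nlinarith
  set G : ℝ × ℝ → ℝ := fun q => rexp (l * (q.1 * n 0 + q.2 * n 1) ^ 2) with hGdef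
  have hG_int : Integrable G (γ.prod γ) := by
    have h1 : Integrable (fun x : ℝ => rexp (l * ((1:ℝ) * x + 0) ^ 2)) γ :=
      (gauss_shift 1 0 hl (by norm_num; linarith)).1
    have h1' : Integrable (fun x : ℝ => rexp (l * x ^ 2)) γ := by
      refine h1.congr (Filter.Eventually.of_forall fun x => ?_); norm_num
    refine (h1'.mul_prod h1').mono ?_ ?_
    · exact Continuous.aestronglyMeasurable (by fun_prop)
    · refine Filter.Eventually.of_forall fun q => ?_
      rw [Real.norm_eq_abs, abs_of_pos (Real.exp_pos _), Real.norm_eq_abs,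
        abs_of_pos (by positivity), ← Real.exp_add]
      apply Real.exp_le_exp.2
      have key : (q.1 * n 0 + q.2 * n 1) ^ 2 ≤ q.1 ^ 2 + q.2 ^ 2 := by
        nlinarith [sq_nonneg (q.1 * n 1 - q.2 * n 0)]
      nlinarith [mul_le_mul_of_nonneg_left key hl]
  have hinner : ∀ x : ℝ, ∫ y : ℝ, G (x, y) ∂γ
      = (Real.sqrt (1 - 2 * l * n 1 ^ 2))⁻¹ * rexp (l₂ * x ^ 2) := by
    intro x
    have h2 : 2 * l * n 1 ^ 2 < 1 := by nlinarith
    have := (gauss_shift (n 1) (x * n 0) hl h2).2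
    rw [hγ]
    rw [show (fun y : ℝ => G (x, y)) = fun y : ℝ => rexp (l * (n 1 * y + x * n 0) ^ 2) by
      funext y; rw [hGdef]; ring_nf]
    rw [this]
    congr 1
    rw [hl₂def]
    field_simp
  have houter : ∫ x : ℝ, (Real.sqrt (1 - 2 * l * n 1 ^ 2))⁻¹ * rexp (l₂ * x ^ 2) ∂γ
      = (Real.sqrt (1 - 2 * l * n 1 ^ 2))⁻¹ * ((Real.sqrt (1 - 2 * l₂))⁻¹) := by
    rw [integral_const_mul]
    have := (gauss_shift 1 0 hl₂ hl₂2).2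
    simp only [one_pow, mul_one, one_mul, add_zero] at this
    rw [this]
    norm_num
  have hprod_int : ∫ q, G q ∂(γ.prod γ)
      = (Real.sqrt (1 - 2 * l * n 1 ^ 2))⁻¹ * (Real.sqrt (1 - 2 * l₂))⁻¹ := by
    rw [integral_prod G hG_int]
    rw [← houter]
    exact integral_congr_ae (Filter.Eventually.of_forall fun x => hinner x)
  have hsqrt : (Real.sqrt (1 - 2 * l * n 1 ^ 2))⁻¹ * (Real.sqrt (1 - 2 * l₂))⁻¹
      = (Real.sqrt (1 - 2 * l))⁻¹ := by
    rw [← mul_inv, ← Real.sqrt_mul hA.le]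
    congr 2
    rw [hl₂def]
    field_simp
    linear_combination (-2*l) * hn
  have hmp := measurePreserving_finTwoArrow (α := ℝ) γ
  have hemb := (MeasurableEquiv.finTwoArrow (α := ℝ)).measurableEmbedding
  have hcomp : ∀ z : Fin 2 → ℝ,
      rexp (l * (inner ℝ ((MeasurableEquiv.toLp 2 (Fin 2 → ℝ)) z) n : ℝ) ^ 2)
        = G (MeasurableEquiv.finTwoArrow z) := by
    intro z
    rw [inner_symm_apply, hGdef]
    rfl
  constructor
  · rw [stdGaussian2,
      (MeasurableEquiv.toLp 2 (Fin 2 → ℝ)).measurableEmbedding.integrable_map_iff]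
    have : (fun y : E2 => rexp (l * (inner ℝ y n : ℝ) ^ 2))
        ∘ (MeasurableEquiv.toLp 2 (Fin 2 → ℝ))
        = (G ∘ MeasurableEquiv.finTwoArrow) := by
      funext z; exact hcomp z
    rw [this, hmp.integrable_comp_emb hemb]
    exact hG_int
  · rw [stdGaussian2, integral_map_equiv]
    have : ∫ z : Fin 2 → ℝ,
        rexp (l * (inner ℝ ((MeasurableEquiv.toLp 2 (Fin 2 → ℝ)) z) n : ℝ) ^ 2)
          ∂(Measure.pi fun _ => γ)
        = ∫ z : Fin 2 → ℝ, G (MeasurableEquiv.finTwoArrow z) ∂(Measure.pi fun _ => γ) := by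
      exact integral_congr_ae (Filter.Eventually.of_forall fun z => hcomp z)
    rw [this, hmp.integral_comp hemb G, hprod_int, hsqrt]

/-! ### Geometry -/

def nvec (v : E2) : E2 := ‖v‖⁻¹ • (EuclideanSpace.equiv (Fin 2) ℝ).symm ![-(v 1), v 0]

lemma nvec_apply0 (v : E2) : nvec v 0 = ‖v‖⁻¹ * (-(v 1)) := rfl
lemma nvec_apply1 (v : E2) : nvec v 1 = ‖v‖⁻¹ * v 0 := rfl

lemma norm_sq_e2 (w : E2) : ‖w‖ ^ 2 = w 0 ^ 2 + w 1 ^ 2 := by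
  rw [EuclideanSpace.norm_eq, Fin.sum_univ_two, Real.sq_sqrt (by positivity)]
  simp [sq_abs]

lemma inner_e2 (x w : E2) : (inner ℝ x w : ℝ) = x 0 * w 0 + x 1 * w 1 := by
  rw [PiLp.inner_apply, Fin.sum_univ_two]
  simp [RCLike.inner_apply]
  ring

lemma nvec_unit (v : E2) (hv : v ≠ 0) : nvec v 0 ^ 2 + nvec v 1 ^ 2 = 1 := by
  have hne : ‖v‖ ≠ 0 := norm_ne_zero_iff.2 hv
  rw [nvec_apply0, nvec_apply1]
  have h := norm_sq_e2 v
  field_simp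
  linarith [h]

lemma dist_line_le (p v : E2) (hv : v ≠ 0) (u : E2) (hu : u ∈ lineSet p v) (x : E2) :
    Metric.infDist (u + x) (lineSet p v) ≤ |(inner ℝ x (nvec v) : ℝ)| := by
  have hne : ‖v‖ ≠ 0 := norm_ne_zero_iff.2 hv
  have hnorm := norm_sq_e2 v
  have hWpos : (0:ℝ) < v 0 ^ 2 + v 1 ^ 2 := by
    rw [← hnorm]; positivity
  obtain ⟨t₀, ht₀⟩ := hu
  set s : ℝ := (inner ℝ x v : ℝ) / ‖v‖ ^ 2 with hs
  have hmem : u + s • v ∈ lineSet p v := by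
    refine ⟨t₀ + s, ?_⟩
    rw [ht₀, add_smul]
    abel
  have e0 : (x - s • v) 0 = x 0 - s * v 0 := rfl
  have e1 : (x - s • v) 1 = x 1 - s * v 1 := rfl
  have hinner : (inner ℝ x (nvec v) : ℝ) = ‖v‖⁻¹ * (x 1 * v 0 - x 0 * v 1) := by
    rw [inner_e2, nvec_apply0, nvec_apply1]
    ring
  have hsq : ‖x - s • v‖ ^ 2 = |(inner ℝ x (nvec v) : ℝ)| ^ 2 := by
    rw [norm_sq_e2, sq_abs, e0, e1, hinner, hs, inner_e2, mul_pow, inv_pow, hnorm]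
    field_simp
    ring
  have hfin : ‖x - s • v‖ = |(inner ℝ x (nvec v) : ℝ)| := by
    rw [← Real.sqrt_sq (norm_nonneg (x - s • v)), hsq, Real.sqrt_sq (abs_nonneg _)]
  calc Metric.infDist (u + x) (lineSet p v) ≤ dist (u + x) (u + s • v) :=
        Metric.infDist_le_dist_of_mem hmem
    _ = ‖x - s • v‖ := by rw [dist_eq_norm]; congr 1; abel
    _ = |(inner ℝ x (nvec v) : ℝ)| := hfin

lemma tlsScore_le (p v : E2) (hv : v ≠ 0) (u : Fin 3 → E2) (hu : ∀ i, u i ∈ lineSet p v)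
    (σ : ℝ) (y : Fin 3 → E2) :
    tlsScore (u 0 + σ • y 0) (u 1 + σ • y 1) (u 2 + σ • y 2)
      ≤ σ ^ 2 * ((inner ℝ (y 0) (nvec v) : ℝ) ^ 2 + (inner ℝ (y 1) (nvec v) : ℝ) ^ 2
          + (inner ℝ (y 2) (nvec v) : ℝ) ^ 2) := by
  have hbdd : BddBelow {s : ℝ | ∃ p v : E2, v ≠ 0 ∧
      s = Metric.infDist (u 0 + σ • y 0) (lineSet p v) ^ 2
        + Metric.infDist (u 1 + σ • y 1) (lineSet p v) ^ 2
        + Metric.infDist (u 2 + σ • y 2) (lineSet p v) ^ 2} := by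
    refine ⟨0, ?_⟩
    rintro s ⟨p', v', hv', rfl⟩
    positivity
  have hmem : Metric.infDist (u 0 + σ • y 0) (lineSet p v) ^ 2
        + Metric.infDist (u 1 + σ • y 1) (lineSet p v) ^ 2
        + Metric.infDist (u 2 + σ • y 2) (lineSet p v) ^ 2
      ∈ {s : ℝ | ∃ p v : E2, v ≠ 0 ∧
      s = Metric.infDist (u 0 + σ • y 0) (lineSet p v) ^ 2
        + Metric.infDist (u 1 + σ • y 1) (lineSet p v) ^ 2
        + Metric.infDist (u 2 + σ • y 2) (lineSet p v) ^ 2} := ⟨p, v, hv, rfl⟩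
  refine le_trans (csInf_le hbdd hmem) ?_
  have key : ∀ i : Fin 3, Metric.infDist (u i + σ • y i) (lineSet p v) ^ 2
      ≤ σ ^ 2 * (inner ℝ (y i) (nvec v) : ℝ) ^ 2 := by
    intro i
    have h := dist_line_le p v hv (u i) (hu i) (σ • y i)
    have h2 : |(inner ℝ (σ • y i) (nvec v) : ℝ)| = |σ| * |(inner ℝ (y i) (nvec v) : ℝ)| := by
      rw [real_inner_smul_left, abs_mul]
    have h3 := pow_le_pow_left₀ Metric.infDist_nonneg (h.trans_eq h2) 2
    calc Metric.infDist (u i + σ • y i) (lineSet p v) ^ 2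
        ≤ (|σ| * |(inner ℝ (y i) (nvec v) : ℝ)|) ^ 2 := h3
      _ = σ ^ 2 * (inner ℝ (y i) (nvec v) : ℝ) ^ 2 := by rw [mul_pow, sq_abs, sq_abs]
  linarith [key 0, key 1, key 2]

/-- chi-squared tail bound for the within-community TLS score. -/
theorem tls_within_tail_bound
    (σ t : ℝ) (hσ : 0 < σ)
    (p v : E2) (hv : v ≠ 0)
    (u : Fin 3 → E2) (hu : ∀ i, u i ∈ lineSet p v)
    (ht : Real.sqrt 3 * σ < t) :
    (Measure.pi fun _ : Fin 3 => stdGaussian2)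
        {y | t ^ 2 ≤ tlsScore (u 0 + σ • y 0) (u 1 + σ • y 1) (u 2 + σ • y 2)}
      ≤ ENNReal.ofReal
          (Real.exp (-(3 / 2) *
            (t ^ 2 / (3 * σ ^ 2) - 1 - Real.log (t ^ 2 / (3 * σ ^ 2))))) := by
  classical
  haveI hprob : IsProbabilityMeasure stdGaussian2 := by
    rw [stdGaussian2]
    exact Measure.isProbabilityMeasure_map
      ((MeasurableEquiv.toLp 2 (Fin 2 → ℝ)).measurable.aemeasurable)
  set n : E2 := nvec v with hndef
  have hnunit := nvec_unit v hv
  -- numeric setup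
  have htpos : 0 < t := lt_of_le_of_lt (by positivity) ht
  have h3 : 3 * σ ^ 2 < t ^ 2 := by
    have := pow_lt_pow_left₀ ht (by positivity : (0:ℝ) ≤ Real.sqrt 3 * σ) (n := 2) (by norm_num)
    calc 3 * σ ^ 2 = (Real.sqrt 3 * σ) ^ 2 := by
          rw [mul_pow, Real.sq_sqrt (by norm_num : (0:ℝ) ≤ 3)]
      _ < t ^ 2 := this
  set a : ℝ := t ^ 2 / (3 * σ ^ 2) with hadef
  have ha : 1 < a := by
    rw [hadef, lt_div_iff₀ (by positivity)]
    linarith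
  have ha0 : (0:ℝ) < a := by linarith
  set l : ℝ := (a - 1) / (2 * a) with hldef
  have hl : 0 ≤ l := by
    rw [hldef]
    exact div_nonneg (by linarith) (by linarith)
  have hl2 : l < 1 / 2 := by
    rw [hldef, div_lt_div_iff₀ (by positivity) (by norm_num)]
    linarith
  have h12l : 1 - 2 * l = a⁻¹ := by
    rw [hldef]
    field_simp
    ring
  -- the statistic
  set g : (Fin 3 → E2) → ℝ := fun y => (inner ℝ (y 0) n : ℝ) ^ 2 + (inner ℝ (y 1) n : ℝ) ^ 2
      + (inner ℝ (y 2) n : ℝ) ^ 2 with hgdef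
  -- event inclusion
  have hsub : {y : Fin 3 → E2 | t ^ 2 ≤ tlsScore (u 0 + σ • y 0) (u 1 + σ • y 1) (u 2 + σ • y 2)}
      ⊆ {y : Fin 3 → E2 | t ^ 2 / σ ^ 2 ≤ g y} := by
    intro y hy
    have h1 : t ^ 2 ≤ σ ^ 2 * g y :=
      le_trans hy (tlsScore_le p v hv u hu σ y)
    have hσ2 : (0:ℝ) < σ ^ 2 := by positivity
    rw [Set.mem_setOf_eq, div_le_iff₀ hσ2]
    linarith
  refine le_trans (measure_mono hsub) ?_
  -- Chernoff bound via the mgf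
  letI : MeasureSpace E2 := ⟨stdGaussian2⟩
  haveI : SigmaFinite (volume : Measure E2) := inferInstance
  have hvol : (Measure.pi fun _ : Fin 3 => stdGaussian2) = (volume : Measure (Fin 3 → E2)) := rfl
  obtain ⟨hint1, hval1⟩ := e2_exp n hnunit hl hl2
  have hfun : ∀ y : Fin 3 → E2, rexp (l * g y)
      = ∏ i : Fin 3, rexp (l * (inner ℝ (y i) n : ℝ) ^ 2) := by
    intro y
    rw [Fin.prod_univ_three, ← Real.exp_add, ← Real.exp_add, hgdef]
    congr 1
    ring
  have hint : Integrable (fun y : Fin 3 → E2 => rexp (l * g y)) (volume : Measure (Fin 3 → E2)) := by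
    have := Integrable.fintype_prod (𝕜 := ℝ) (ι := Fin 3)
      (f := fun _ z => rexp (l * (inner ℝ z n : ℝ) ^ 2)) (fun _ => hint1)
    exact this.congr (Filter.Eventually.of_forall fun y => (hfun y).symm)
  have hmgf : mgf g (volume : Measure (Fin 3 → E2)) l = ((Real.sqrt (1 - 2 * l))⁻¹) ^ 3 := by
    rw [mgf]
    rw [show ∫ y : Fin 3 → E2, rexp (l * g y)
        = ∫ y : Fin 3 → E2, ∏ i : Fin 3, rexp (l * (inner ℝ (y i) n : ℝ) ^ 2) from
      integral_congr_ae (Filter.Eventually.of_forall fun y => hfun y)]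
    rw [show (volume : Measure (Fin 3 → E2)) = Measure.pi fun _ => (volume : Measure E2) from rfl]
    rw [MeasureTheory.integral_fintype_prod_eq_pow (ι := Fin 3) (μ := (volume : Measure E2))
      (f := fun z : E2 => rexp (l * (inner ℝ z n : ℝ) ^ 2))]
    have hval1' : ∫ z : E2, rexp (l * (inner ℝ z n : ℝ) ^ 2) ∂(volume : Measure E2)
        = (Real.sqrt (1 - 2 * l))⁻¹ := hval1
    rw [hval1']
    norm_num
  have hmarkov := measure_ge_le_exp_mul_mgf (X := g) (μ := (volume : Measure (Fin 3 → E2)))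
    (t ^ 2 / σ ^ 2) hl hint
  rw [hmgf] at hmarkov
  rw [hvol]
  calc (volume : Measure (Fin 3 → E2)) {y | t ^ 2 / σ ^ 2 ≤ g y}
      = ENNReal.ofReal (((volume : Measure (Fin 3 → E2)) {y | t ^ 2 / σ ^ 2 ≤ g y}).toReal) :=
        (ENNReal.ofReal_toReal (measure_ne_top _ _)).symm
    _ ≤ ENNReal.ofReal (rexp (-l * (t ^ 2 / σ ^ 2)) * (Real.sqrt (1 - 2 * l))⁻¹ ^ 3) :=
        ENNReal.ofReal_le_ofReal hmarkov
    _ = ENNReal.ofReal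
          (Real.exp (-(3 / 2) *
            (t ^ 2 / (3 * σ ^ 2) - 1 - Real.log (t ^ 2 / (3 * σ ^ 2))))) := ?_
  congr 1
  -- final numeric identity
  have hsq : (Real.sqrt (1 - 2 * l))⁻¹ = Real.sqrt a := by
    rw [h12l, Real.sqrt_inv, inv_inv]
  have hsqrt_exp : Real.sqrt a = rexp (Real.log a / 2) := by
    rw [← Real.exp_log (Real.sqrt_pos.2 ha0), Real.log_sqrt ha0.le]
  have hts : t ^ 2 / σ ^ 2 = 3 * a := by
    rw [hadef]
    field_simp
  rw [hsq, hsqrt_exp, hts, ← Real.exp_nat_mul, ← Real.exp_add, ← hadef]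
  congr 1
  have hla : l * (3 * a) = 3 * (a - 1) / 2 := by
    rw [hldef]
    field_simp
  linarith [hla]

end
end
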